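/- arXiv:0810.2890 — 5 statements merged into one kernel-verified Lean document; each statement's English description precedes it below -/
import Mathlib

section
/- Let f ∈ ℓ²₀(ℕ)^{∘n} and g ∈ ℓ²₀(ℕ)^{∘m} (n, m ≥ 1), and let 0 ≤ l ≤ r ≤ min(n,m). Then the contraction f ⋆_r^l g belongs to ℓ²(ℕ)^{⊗(n+m−r−l)}, and ‖f ⋆_r^l g‖_{ℓ²(ℕ)^{⊗(n+m−r−l)}} ≤ ‖f‖_{ℓ²(ℕ)^{⊗n}} · ‖g‖_{ℓ²(ℕ)^{⊗m}}. -/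
open MeasureTheory ProbabilityTheory Filter
open scoped ENNReal NNReal

noncomputable section
/-- The squared `ℓ²` norm of a kernel. -/
def l2sq {ι : Type*} (F : ι → ℝ) : ℝ := ∑' x, (F x) ^ 2

/-- The `ℓ²` norm of a kernel. -/
def l2norm {ι : Type*} (F : ι → ℝ) : ℝ := Real.sqrt (∑' x, (F x) ^ 2)

/-- Squared `ℓ²` norm of a kernel given in three blocks of variables. -/
def l2sq3 {a b c : ℕ} (F : (Fin a → ℕ) → (Fin b → ℕ) → (Fin c → ℕ) → ℝ) : ℝ :=
  ∑' p : (Fin a → ℕ) × (Fin b → ℕ) × (Fin c → ℕ), (F p.1 p.2.1 p.2.2) ^ 2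

/-- `ℓ²` norm of a kernel given in three blocks of variables. -/
def l2norm3 {a b c : ℕ} (F : (Fin a → ℕ) → (Fin b → ℕ) → (Fin c → ℕ) → ℝ) : ℝ :=
  Real.sqrt (l2sq3 F)

/-- `f ∈ ℓ²₀(ℕ)^{∘n}`: square-summable, symmetric, and vanishing on diagonals. -/
def MemEll20 (n : ℕ) (f : (Fin n → ℕ) → ℝ) : Prop :=
  Summable (fun x => (f x) ^ 2) ∧
  (∀ (σ : Equiv.Perm (Fin n)) (x : Fin n → ℕ), f (x ∘ σ) = f x) ∧
  (∀ x : Fin n → ℕ, ¬ Function.Injective x → f x = 0)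

/-- Concatenation of three blocks of variables into a vector of `n` variables;
when `a + b + c = n` this is the genuine concatenation. -/
def assemble3 {n : ℕ} (a b c : ℕ) (x : Fin a → ℕ) (y : Fin b → ℕ) (z : Fin c → ℕ) :
    Fin n → ℕ := fun i =>
  if h1 : (i : ℕ) < a then x ⟨i, h1⟩
  else if h2 : (i : ℕ) - a < b then y ⟨(i : ℕ) - a, h2⟩
  else if h3 : (i : ℕ) - a - b < c then z ⟨(i : ℕ) - a - b, h3⟩
  else 0

/-- The contraction `f ⋆_r^l g`, as a function of three blocks of variables: the
`n - r` remaining variables of `f`, the `r - l` identified (but not summed)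
variables, and the `m - r` remaining variables of `g`; the `l` remaining
identified variables are integrated out with respect to the counting measure. -/
def starContr (n m r l : ℕ) (f : (Fin n → ℕ) → ℝ) (g : (Fin m → ℕ) → ℝ) :
    (Fin (n - r) → ℕ) → (Fin (r - l) → ℕ) → (Fin (m - r) → ℕ) → ℝ :=
  fun i k j => ∑' a : Fin l → ℕ,
    f (assemble3 (n - r) (r - l) l i k a) * g (assemble3 (m - r) (r - l) l j k a)

lemma assemble3_left {n a b c : ℕ} (h : a + b + c = n) (x : Fin a → ℕ) (y : Fin b → ℕ)
    (z : Fin c → ℕ) (i : Fin a) :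
    assemble3 (n := n) a b c x y z ⟨i, by omega⟩ = x i := by
  simp [assemble3, i.isLt]

lemma assemble3_mid {n a b c : ℕ} (h : a + b + c = n) (x : Fin a → ℕ) (y : Fin b → ℕ)
    (z : Fin c → ℕ) (i : Fin b) :
    assemble3 (n := n) a b c x y z ⟨a + i, by omega⟩ = y i := by
  have h1 : ¬ (a + (i:ℕ) < a) := by omega
  have h2 : a + (i:ℕ) - a < b := by omega
  simp only [assemble3, dif_neg h1, dif_pos h2]
  congr 1
  ext
  simp
  try omega

lemma assemble3_right {n a b c : ℕ} (h : a + b + c = n) (x : Fin a → ℕ) (y : Fin b → ℕ)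
    (z : Fin c → ℕ) (i : Fin c) :
    assemble3 (n := n) a b c x y z ⟨a + b + i, by omega⟩ = z i := by
  have h1 : ¬ (a + b + (i:ℕ) < a) := by omega
  have h2 : ¬ (a + b + (i:ℕ) - a < b) := by omega
  have h3 : a + b + (i:ℕ) - a - b < c := by omega
  simp only [assemble3, dif_neg h1, dif_neg h2, dif_pos h3]
  congr 1
  ext
  simp
  try omega

lemma assemble3_injective {n a b c : ℕ} (h : a + b + c = n) :
    Function.Injective (fun p : ((Fin a → ℕ) × (Fin b → ℕ)) × (Fin c → ℕ) =>
      (assemble3 (n := n) a b c p.1.1 p.1.2 p.2 : Fin n → ℕ)) := by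
  rintro ⟨⟨x, y⟩, z⟩ ⟨⟨x', y'⟩, z'⟩ he
  simp only [Prod.mk.injEq]
  refine ⟨⟨funext fun i => ?_, funext fun i => ?_⟩, funext fun i => ?_⟩
  · have := congrFun he ⟨i, by omega⟩
    dsimp only at this
    rwa [assemble3_left h, assemble3_left h] at this
  · have := congrFun he ⟨a + i, by omega⟩
    dsimp only at this
    rwa [assemble3_mid h, assemble3_mid h] at this
  · have := congrFun he ⟨a + b + i, by omega⟩
    dsimp only at this
    rwa [assemble3_right h, assemble3_right h] at this

lemma tsum_mul_sq_le {ι : Type*} {F G : ι → ℝ} (hF : Summable fun x => F x ^ 2)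
    (hG : Summable fun x => G x ^ 2) :
    (∑' x, F x * G x) ^ 2 ≤ (∑' x, F x ^ 2) * (∑' x, G x ^ 2) := by
  have habs : ∀ x, |F x * G x| ≤ (F x ^ 2 + G x ^ 2) / 2 := by
    intro x
    rw [abs_mul]
    nlinarith [sq_abs (F x), sq_abs (G x), sq_nonneg (|F x| - |G x|), abs_nonneg (F x),
      abs_nonneg (G x)]
  have hFG : Summable fun x => F x * G x :=
    Summable.of_abs (Summable.of_nonneg_of_le (fun x => abs_nonneg _) habs
      ((hF.add hG).div_const 2))
  have ht : Filter.Tendsto (fun t : Finset ι => (∑ b ∈ t, F b * G b) ^ 2)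
      Filter.atTop (nhds ((∑' x, F x * G x) ^ 2)) := hFG.hasSum.pow 2
  refine le_of_tendsto ht (Filter.Eventually.of_forall fun t => ?_)
  calc (∑ b ∈ t, F b * G b) ^ 2 ≤ (∑ b ∈ t, F b ^ 2) * (∑ b ∈ t, G b ^ 2) :=
        Finset.sum_mul_sq_le_sq_mul_sq t F G
    _ ≤ (∑' x, F x ^ 2) * (∑' x, G x ^ 2) := by
        apply mul_le_mul (Summable.sum_le_tsum t (fun _ _ => sq_nonneg _) hF)
          (Summable.sum_le_tsum t (fun _ _ => sq_nonneg _) hG)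
          (Finset.sum_nonneg fun _ _ => sq_nonneg _) (tsum_nonneg fun _ => sq_nonneg _)

/-- Auxiliary equivalence swapping the first two factors of a triple product. -/
def triSwap (X Y Z : Type*) : X × Y × Z ≃ Y × X × Z where
  toFun p := (p.2.1, p.1, p.2.2)
  invFun q := (q.2.1, q.1, q.2.2)
  left_inv _ := rfl
  right_inv _ := rfl

set_option maxHeartbeats 1000000 in

/-- For `f ∈ ℓ²₀(ℕ)^{∘n}`, `g ∈ ℓ²₀(ℕ)^{∘m}` and
`0 ≤ l ≤ r ≤ min n m`, the contraction `f ⋆_r^l g` is square-summable and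
`‖f ⋆_r^l g‖ ≤ ‖f‖ ‖g‖`. -/
theorem stmt0 (n m r l : ℕ) (hn : 1 ≤ n) (hm : 1 ≤ m)
    (hlr : l ≤ r) (hrn : r ≤ n) (hrm : r ≤ m)
    (f : (Fin n → ℕ) → ℝ) (g : (Fin m → ℕ) → ℝ)
    (hf : MemEll20 n f) (hg : MemEll20 m g) :
    Summable (fun p : (Fin (n - r) → ℕ) × (Fin (r - l) → ℕ) × (Fin (m - r) → ℕ) =>
      (starContr n m r l f g p.1 p.2.1 p.2.2) ^ 2) ∧
    l2norm3 (starContr n m r l f g) ≤ l2norm f * l2norm g := by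
  classical
  have hnn : (n - r) + (r - l) + l = n := by omega
  have hmm : (m - r) + (r - l) + l = m := by omega
  -- summability of the pulled-back squares
  have hFtr : Summable (fun p : ((Fin (n - r) → ℕ) × (Fin (r - l) → ℕ)) × (Fin l → ℕ) =>
      f (assemble3 (n - r) (r - l) l p.1.1 p.1.2 p.2) ^ 2) :=
    hf.1.comp_injective (assemble3_injective hnn)
  have hGtr : Summable (fun p : ((Fin (m - r) → ℕ) × (Fin (r - l) → ℕ)) × (Fin l → ℕ) =>
      g (assemble3 (m - r) (r - l) l p.1.1 p.1.2 p.2) ^ 2) :=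
    hg.1.comp_injective (assemble3_injective hmm)
  set A : (Fin (n - r) → ℕ) × (Fin (r - l) → ℕ) → ℝ := fun q => ∑' a : (Fin l → ℕ), f (assemble3 (n - r) (r - l) l q.1 q.2 a) ^ 2 with hA
  set B : (Fin (m - r) → ℕ) × (Fin (r - l) → ℕ) → ℝ := fun q => ∑' a : (Fin l → ℕ), g (assemble3 (m - r) (r - l) l q.1 q.2 a) ^ 2 with hB
  have hApair := (summable_prod_of_nonneg (fun _ => sq_nonneg _)).mp hFtr
  have hBpair := (summable_prod_of_nonneg (fun _ => sq_nonneg _)).mp hGtr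
  have hAsum : Summable A := hApair.2
  have hBsum : Summable B := hBpair.2
  have hAnn : ∀ q, 0 ≤ A q := fun q => tsum_nonneg fun _ => sq_nonneg _
  have hBnn : ∀ q, 0 ≤ B q := fun q => tsum_nonneg fun _ => sq_nonneg _
  -- total tsum bounds
  have htA : ∑' q : (Fin (n - r) → ℕ) × (Fin (r - l) → ℕ), A q ≤ ∑' x, f x ^ 2 := by
    rw [← Summable.tsum_prod' hFtr hApair.1]
    exact Summable.tsum_le_tsum_of_inj _ (assemble3_injective hnn) (fun c _ => sq_nonneg _)
      (fun p => le_rfl) hFtr hf.1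
  have htB : ∑' q : (Fin (m - r) → ℕ) × (Fin (r - l) → ℕ), B q ≤ ∑' x, g x ^ 2 := by
    rw [← Summable.tsum_prod' hGtr hBpair.1]
    exact Summable.tsum_le_tsum_of_inj _ (assemble3_injective hmm) (fun c _ => sq_nonneg _)
      (fun p => le_rfl) hGtr hg.1
  -- swapped versions: fiberwise summability in the first variable
  have hAswap : Summable (fun q : (Fin (r - l) → ℕ) × (Fin (n - r) → ℕ) => A (q.2, q.1)) :=
    hAsum.comp_injective (Equiv.prodComm (Fin (r - l) → ℕ) (Fin (n - r) → ℕ)).injective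
  have hBswap : Summable (fun q : (Fin (r - l) → ℕ) × (Fin (m - r) → ℕ) => B (q.2, q.1)) :=
    hBsum.comp_injective (Equiv.prodComm (Fin (r - l) → ℕ) (Fin (m - r) → ℕ)).injective
  have hApair' := (summable_prod_of_nonneg (fun _ => hAnn _)).mp hAswap
  have hBpair' := (summable_prod_of_nonneg (fun _ => hBnn _)).mp hBswap
  set C : (Fin (r - l) → ℕ) → ℝ := fun k => ∑' i : (Fin (n - r) → ℕ), A (i, k) with hC
  set D : (Fin (r - l) → ℕ) → ℝ := fun k => ∑' j : (Fin (m - r) → ℕ), B (j, k) with hD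
  have hCsum : Summable C := hApair'.2
  have hDsum : Summable D := hBpair'.2
  have hCnn : ∀ k, 0 ≤ C k := fun k => tsum_nonneg fun _ => hAnn _
  have hDnn : ∀ k, 0 ≤ D k := fun k => tsum_nonneg fun _ => hBnn _
  have htC : ∑' k, C k = ∑' q : (Fin (n - r) → ℕ) × (Fin (r - l) → ℕ), A q := by
    rw [← Summable.tsum_prod' hAswap hApair'.1]
    exact ((Equiv.prodComm (Fin (r - l) → ℕ) (Fin (n - r) → ℕ)).tsum_eq A)
  have htD : ∑' k, D k = ∑' q : (Fin (m - r) → ℕ) × (Fin (r - l) → ℕ), B q := by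
    rw [← Summable.tsum_prod' hBswap hBpair'.1]
    exact ((Equiv.prodComm (Fin (r - l) → ℕ) (Fin (m - r) → ℕ)).tsum_eq B)
  -- the product kernel on triples
  set P : (Fin (n - r) → ℕ) × (Fin (r - l) → ℕ) × (Fin (m - r) → ℕ) → ℝ := fun p => A (p.1, p.2.1) * B (p.2.2, p.2.1) with hP
  have hPnn : ∀ p, 0 ≤ P p := fun p => mul_nonneg (hAnn _) (hBnn _)
  -- summability of P via the regrouped version Q
  set Q : (Fin (r - l) → ℕ) × (Fin (n - r) → ℕ) × (Fin (m - r) → ℕ) → ℝ := fun q => A (q.2.1, q.1) * B (q.2.2, q.1) with hQ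
  have hQfib : ∀ k : (Fin (r - l) → ℕ), Summable (fun p : (Fin (n - r) → ℕ) × (Fin (m - r) → ℕ) => A (p.1, k) * B (p.2, k)) := fun k =>
    Summable.mul_of_nonneg (hApair'.1 k) (hBpair'.1 k) (fun _ => hAnn _) (fun _ => hBnn _)
  have hQfib_tsum : ∀ k : (Fin (r - l) → ℕ), ∑' p : (Fin (n - r) → ℕ) × (Fin (m - r) → ℕ), A (p.1, k) * B (p.2, k) = C k * D k := by
    intro k
    rw [Summable.tsum_prod' (hQfib k) (fun i => (hBpair'.1 k).mul_left (A (i, k)))]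
    calc ∑' (i : (Fin (n - r) → ℕ)), ∑' (j : (Fin (m - r) → ℕ)), A (i, k) * B (j, k)
        = ∑' (i : (Fin (n - r) → ℕ)), A (i, k) * D k := by
          refine tsum_congr fun i => ?_; exact tsum_mul_left
      _ = C k * D k := by rw [hC, hD]; exact tsum_mul_right
  have hCD : Summable (fun k => C k * D k) := by
    refine Summable.of_nonneg_of_le (fun k => mul_nonneg (hCnn k) (hDnn k))
      (fun k => mul_le_mul_of_nonneg_right (Summable.le_tsum hCsum k (fun _ _ => hCnn _)) (hDnn k))
      (hDsum.mul_left _)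
  have hQsum : Summable Q := by
    refine (summable_prod_of_nonneg (fun q => mul_nonneg (hAnn _) (hBnn _))).mpr
      ⟨fun k => hQfib k, ?_⟩
    simpa only [hQfib_tsum] using hCD
  have hPsum : Summable P := by
    let e := triSwap (Fin (n - r) → ℕ) (Fin (r - l) → ℕ) (Fin (m - r) → ℕ)
    have := hQsum.comp_injective e.injective
    rw [hQ] at this
    rw [hP]
    exact this
  -- pointwise Cauchy–Schwarz
  have hkey : ∀ p : (Fin (n - r) → ℕ) × (Fin (r - l) → ℕ) × (Fin (m - r) → ℕ), (starContr n m r l f g p.1 p.2.1 p.2.2) ^ 2 ≤ P p := by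
    intro p
    exact tsum_mul_sq_le (hApair.1 (p.1, p.2.1)) (hBpair.1 (p.2.2, p.2.1))
  have hSsum : Summable (fun p : (Fin (n - r) → ℕ) × (Fin (r - l) → ℕ) × (Fin (m - r) → ℕ) =>
      (starContr n m r l f g p.1 p.2.1 p.2.2) ^ 2) :=
    Summable.of_nonneg_of_le (fun p => sq_nonneg _) hkey hPsum
  refine ⟨hSsum, ?_⟩
  -- the tsum of P
  have htP : ∑' p : (Fin (n - r) → ℕ) × (Fin (r - l) → ℕ) × (Fin (m - r) → ℕ), P p ≤ (∑' x, f x ^ 2) * (∑' x, g x ^ 2) := by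
    let e := triSwap (Fin (n - r) → ℕ) (Fin (r - l) → ℕ) (Fin (m - r) → ℕ)
    have h1 : ∑' p : (Fin (n - r) → ℕ) × (Fin (r - l) → ℕ) × (Fin (m - r) → ℕ), P p = ∑' q : (Fin (r - l) → ℕ) × (Fin (n - r) → ℕ) × (Fin (m - r) → ℕ), Q q := by
      rw [hP, hQ]
      exact e.tsum_eq (fun q => A (q.2.1, q.1) * B (q.2.2, q.1))
    have h2 : ∑' q : (Fin (r - l) → ℕ) × (Fin (n - r) → ℕ) × (Fin (m - r) → ℕ), Q q = ∑' k, C k * D k := by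
      rw [Summable.tsum_prod' hQsum (fun k => hQfib k)]
      exact tsum_congr fun k => hQfib_tsum k
    have h3 : ∑' k, C k * D k ≤ (∑' k, C k) * (∑' k, D k) := by
      calc ∑' k, C k * D k ≤ ∑' k, (∑' k', C k') * D k := by
            refine Summable.tsum_le_tsum (fun k =>
              mul_le_mul_of_nonneg_right (Summable.le_tsum hCsum k (fun _ _ => hCnn _)) (hDnn k))
              hCD (hDsum.mul_left _)
        _ = (∑' k, C k) * (∑' k, D k) := tsum_mul_left
    rw [h1, h2]
    refine h3.trans ?_
    rw [htC, htD]
    exact mul_le_mul htA htB (htD ▸ (htD.symm ▸ tsum_nonneg fun q => hBnn q))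
      (tsum_nonneg fun _ => sq_nonneg _)
  rw [l2norm3, l2norm, l2norm, l2sq3]
  rw [← Real.sqrt_mul (tsum_nonneg fun _ => sq_nonneg _)]
  apply Real.sqrt_le_sqrt
  exact (Summable.tsum_le_tsum hkey hSsum hPsum).trans htP
end
end

section
/- Let f ∈ ℓ²₀(ℕ)^{∘n} with n ≥ 2 and g ∈ ℓ²₀(ℕ)^{∘m} with m ≥ 1. Then: (i) sup_{j∈ℕ} [Inf_j(f)]² ≤ ‖f ⋆_n^{n−1} f‖²_{ℓ²(ℕ)} ≤ ‖f‖²_{ℓ²(ℕ)^{⊗n}} · sup_{j∈ℕ} Inf_j(f); and (ii) for every l = 1,…,min(n,m), ‖f ⋆_l^{l−1} g‖²_{ℓ²(ℕ)^{⊗(n+m−2l+1)}} = Σ_{j=1}^∞ ‖f(j,·) ⋆_{l−1}^{l−1} g(j,·)‖²_{ℓ²(ℕ)^{⊗(n+m−2l)}} ≤ ‖f ⋆_n^{n−1} f‖_{ℓ²(ℕ)} · ‖g‖²_{ℓ²(ℕ)^{⊗m}}. -/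
open MeasureTheory ProbabilityTheory Filter
open scoped ENNReal NNReal

noncomputable section
/-- `f(j, ·)`: the kernel of `n - 1` variables obtained by freezing one variable
of the symmetric kernel `f` at `j`. -/
def freeze {n : ℕ} (f : (Fin n → ℕ) → ℝ) (j : ℕ) : (Fin (n - 1) → ℕ) → ℝ :=
  fun b => f (assemble3 1 (n - 1) 0 (fun _ => j) b (fun _ => 0))

/-- The influence of the `j`-th coordinate on `f`. -/
def influence {n : ℕ} (f : (Fin n → ℕ) → ℝ) (j : ℕ) : ℝ :=
  ∑' b : Fin (n - 1) → ℕ, (freeze f j b) ^ 2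

namespace Stmt1Aux

lemma tsum_nonneg_eq_toReal {ι : Type*} {G : ι → ℝ} (h : ∀ x, 0 ≤ G x) :
    ∑' x, G x = (∑' x, ENNReal.ofReal (G x)).toReal := by
  by_cases hs : Summable G
  · rw [← ENNReal.ofReal_tsum_of_nonneg h hs, ENNReal.toReal_ofReal (tsum_nonneg h)]
  · rw [tsum_eq_zero_of_not_summable hs]
    have hT : ∑' x, ENNReal.ofReal (G x) = ∞ := by
      by_contra hne
      exact hs ((ENNReal.summable_toReal hne).congr fun x => ENNReal.toReal_ofReal (h x))
    simp [hT]

lemma summable_nonneg_iff {ι : Type*} {G : ι → ℝ} (h : ∀ x, 0 ≤ G x) :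
    Summable G ↔ ∑' x, ENNReal.ofReal (G x) ≠ ∞ := by
  constructor
  · intro hs
    rw [← ENNReal.ofReal_tsum_of_nonneg h hs]
    exact ENNReal.ofReal_ne_top
  · intro hne
    exact (ENNReal.summable_toReal hne).congr fun x => ENNReal.toReal_ofReal (h x)

lemma summable_abs_mul {ι : Type*} {u v : ι → ℝ} (hu : Summable fun i => u i ^ 2)
    (hv : Summable fun i => v i ^ 2) : Summable fun i => |u i * v i| := by
  refine Summable.of_nonneg_of_le (fun i => abs_nonneg _) (fun i => ?_)
    ((hu.add hv).div_const 2)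
  have h1 : |u i * v i| = |u i| * |v i| := abs_mul _ _
  nlinarith [sq_nonneg (|u i| - |v i|), sq_abs (u i), sq_abs (v i), abs_nonneg (u i), abs_nonneg (v i)]

lemma tsum_abs_mul_le {ι : Type*} {u v : ι → ℝ} (hu : Summable fun i => u i ^ 2)
    (hv : Summable fun i => v i ^ 2) :
    ∑' i, |u i * v i| ≤ Real.sqrt (∑' i, u i ^ 2) * Real.sqrt (∑' i, v i ^ 2) := by
  refine Summable.tsum_le_of_sum_le (summable_abs_mul hu hv) fun s => ?_
  calc ∑ i ∈ s, |u i * v i| = ∑ i ∈ s, |u i| * |v i| := by simp [abs_mul]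
    _ ≤ Real.sqrt (∑ i ∈ s, |u i| ^ 2) * Real.sqrt (∑ i ∈ s, |v i| ^ 2) :=
        Real.sum_mul_le_sqrt_mul_sqrt s _ _
    _ = Real.sqrt (∑ i ∈ s, u i ^ 2) * Real.sqrt (∑ i ∈ s, v i ^ 2) := by
        simp [sq_abs]
    _ ≤ Real.sqrt (∑' i, u i ^ 2) * Real.sqrt (∑' i, v i ^ 2) := by
        gcongr <;>
        exact Summable.sum_le_tsum s (fun i _ => sq_nonneg _) ‹_›

lemma tsum_mul_le_sqrt {ι : Type*} {u v : ι → ℝ} (hu : Summable fun i => u i ^ 2)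
    (hv : Summable fun i => v i ^ 2) :
    ∑' i, u i * v i ≤ Real.sqrt (∑' i, u i ^ 2) * Real.sqrt (∑' i, v i ^ 2) := by
  refine le_trans ?_ (tsum_abs_mul_le hu hv)
  exact Summable.tsum_le_tsum (fun i => le_abs_self _) ((summable_abs_mul hu hv).of_abs)
    (summable_abs_mul hu hv)

lemma tsum_mul_sq_le {ι : Type*} {u v : ι → ℝ} (hu : Summable fun i => u i ^ 2)
    (hv : Summable fun i => v i ^ 2) :
    (∑' i, u i * v i) ^ 2 ≤ (∑' i, u i ^ 2) * ∑' i, v i ^ 2 := by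
  have h1 : |∑' i, u i * v i| ≤ ∑' i, |u i * v i| := by
    simpa [Real.norm_eq_abs, abs_mul] using
      norm_tsum_le_tsum_norm (f := fun i => u i * v i)
        (by simpa [Real.norm_eq_abs, abs_mul] using summable_abs_mul hu hv)
  have h2 := tsum_abs_mul_le hu hv
  have h1' : |∑' i, u i * v i| ≤ ∑' i, |u i * v i| := by
    simpa [abs_mul] using h1
  have h3 : (∑' i, u i * v i) ^ 2 ≤ (∑' i, |u i * v i|) ^ 2 := by
    rw [← sq_abs (∑' i, u i * v i)]
    exact pow_le_pow_left₀ (abs_nonneg _) h1' 2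
  refine h3.trans ?_
  have h4 : (Real.sqrt (∑' i, u i ^ 2) * Real.sqrt (∑' i, v i ^ 2)) ^ 2
      = (∑' i, u i ^ 2) * ∑' i, v i ^ 2 := by
    rw [mul_pow, Real.sq_sqrt (tsum_nonneg fun i => sq_nonneg _),
      Real.sq_sqrt (tsum_nonneg fun i => sq_nonneg _)]
  calc (∑' i, |u i * v i|) ^ 2
      ≤ (Real.sqrt (∑' i, u i ^ 2) * Real.sqrt (∑' i, v i ^ 2)) ^ 2 :=
        pow_le_pow_left₀ (tsum_nonneg fun i => abs_nonneg _) h2 2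
    _ = _ := h4

lemma sqrt_tsum_sq_le {ι : Type*} {c : ι → ℝ} (hc : ∀ i, 0 ≤ c i) (hs : Summable c) :
    Real.sqrt (∑' i, c i ^ 2) ≤ ∑' i, c i := by
  rw [show ∑' i, c i = Real.sqrt ((∑' i, c i) ^ 2) from
    (Real.sqrt_sq (tsum_nonneg hc)).symm]
  apply Real.sqrt_le_sqrt
  have h1 : ∀ i, c i ^ 2 ≤ c i * ∑' j, c j := fun i => by
    rw [sq]
    exact mul_le_mul_of_nonneg_left (Summable.le_tsum hs i fun j _ => hc j) (hc i)
  calc ∑' i, c i ^ 2 ≤ ∑' i, c i * ∑' j, c j :=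
        Summable.tsum_le_tsum h1 (by
          refine Summable.of_nonneg_of_le (fun i => sq_nonneg _) h1 ?_
          exact hs.mul_right _) (hs.mul_right _)
    _ = (∑' i, c i) ^ 2 := by rw [tsum_mul_right, sq]

end Stmt1Aux

namespace Stmt1Aux

lemma assemble3_fst {n a b c : ℕ} (x : Fin a → ℕ) (y : Fin b → ℕ) (z : Fin c → ℕ)
    (p : Fin n) (h : (p : ℕ) < a) : assemble3 a b c x y z p = x ⟨p, h⟩ := by
  simp only [assemble3, dif_pos h]

lemma assemble3_snd {n a b c : ℕ} (x : Fin a → ℕ) (y : Fin b → ℕ) (z : Fin c → ℕ)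
    (p : Fin n) (h1 : ¬ (p : ℕ) < a) (h2 : (p : ℕ) - a < b) :
    assemble3 a b c x y z p = y ⟨(p : ℕ) - a, h2⟩ := by
  simp only [assemble3, dif_neg h1, dif_pos h2]

lemma assemble3_thd {n a b c : ℕ} (x : Fin a → ℕ) (y : Fin b → ℕ) (z : Fin c → ℕ)
    (p : Fin n) (h1 : ¬ (p : ℕ) < a) (h2 : ¬ (p : ℕ) - a < b) (h3 : (p : ℕ) - a - b < c) :
    assemble3 a b c x y z p = z ⟨(p : ℕ) - a - b, h3⟩ := by
  simp only [assemble3, dif_neg h1, dif_neg h2, dif_pos h3]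

/-- splitting equiv -/
def split3 {n : ℕ} (a b c : ℕ) (h : a + b + c = n) :
    ((Fin a → ℕ) × (Fin b → ℕ) × (Fin c → ℕ)) ≃ (Fin n → ℕ) where
  toFun p := assemble3 a b c p.1 p.2.1 p.2.2
  invFun v := (fun i => v ⟨i, by omega⟩, fun i => v ⟨a + i, by omega⟩,
    fun i => v ⟨a + b + i, by omega⟩)
  left_inv p := by
    obtain ⟨x, y, z⟩ := p
    dsimp only
    refine Prod.ext (funext fun i => ?_) (Prod.ext (funext fun i => ?_) (funext fun i => ?_)) <;>
      dsimp only
    · rw [assemble3_fst _ _ _ _ (by have := i.isLt; simp only [Fin.val_mk]; omega)]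
    · rw [assemble3_snd _ _ _ _ (by simp only [Fin.val_mk]; omega)
        (by have := i.isLt; simp only [Fin.val_mk]; omega)]
      exact congrArg y (Fin.ext (by simp only [Fin.val_mk]; omega))
    · rw [assemble3_thd _ _ _ _ (by simp only [Fin.val_mk]; omega)
        (by simp only [Fin.val_mk]; omega)
        (by have := i.isLt; simp only [Fin.val_mk]; omega)]
      exact congrArg z (Fin.ext (by simp only [Fin.val_mk]; omega))
  right_inv v := by
    funext p
    have hp := p.isLt
    dsimp only
    by_cases h1 : (p : ℕ) < a
    · rw [assemble3_fst _ _ _ _ h1]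
    · by_cases h2 : (p : ℕ) - a < b
      · rw [assemble3_snd _ _ _ _ h1 h2]
        exact congrArg v (Fin.ext (by simp only [Fin.val_mk]; omega))
      · rw [assemble3_thd _ _ _ _ h1 h2 (by omega)]
        exact congrArg v (Fin.ext (by simp only [Fin.val_mk]; omega))

/-- `ℕ ≃ (Fin b → ℕ)` when `b = 1`. -/
def eOne {b : ℕ} (h : b = 1) : ℕ ≃ (Fin b → ℕ) := by
  subst h
  exact { toFun := fun j _ => j
          invFun := fun y => y 0
          left_inv := fun j => rfl
          right_inv := fun y => funext fun i => by rw [Subsingleton.elim i 0] }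

lemma eOne_apply {b : ℕ} (h : b = 1) (j : ℕ) (i : Fin b) : eOne h j i = j := by
  subst h; rfl

def uniqueFun {b : ℕ} (h : b = 0) : Unique (Fin b → ℕ) :=
  { default := fun _ => 0
    uniq := fun y => funext fun i => absurd i.isLt (by omega) }

/-- cast equiv between function spaces -/
def eCast {a a' : ℕ} (h : a = a') : (Fin a → ℕ) ≃ (Fin a' → ℕ) :=
  Equiv.arrowCongr (finCongr h) (Equiv.refl ℕ)

lemma eCast_apply {a a' : ℕ} (h : a = a') (x : Fin a → ℕ) (i : Fin a') :
    eCast h x i = x ⟨i, by omega⟩ := rfl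

/-- explicit cycle permutation sending `p ↦ p+1` for `p < t`, `t ↦ 0`, fixing `p > t`. -/
def cyc {n : ℕ} (t : ℕ) (ht : t < n) : Equiv.Perm (Fin n) where
  toFun p := if h : (p : ℕ) < t then ⟨p + 1, by omega⟩ else if (p : ℕ) = t then ⟨0, by omega⟩ else p
  invFun p := if (p : ℕ) = 0 then ⟨t, ht⟩ else if h : (p : ℕ) ≤ t then ⟨p - 1, by omega⟩ else p
  left_inv p := by
    dsimp only
    by_cases h1 : (p : ℕ) < t
    · rw [dif_pos h1, if_neg (by simp only [Fin.val_mk]; omega),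
        dif_pos (by simp only [Fin.val_mk]; omega)]
      exact Fin.ext (by simp only [Fin.val_mk]; omega)
    · by_cases h2 : (p : ℕ) = t
      · rw [dif_neg h1, if_pos h2, if_pos (by simp only [Fin.val_mk])]
        exact Fin.ext (by simp only [Fin.val_mk]; omega)
      · rw [dif_neg h1, if_neg h2, if_neg (by omega), dif_neg (by omega)]
  right_inv p := by
    dsimp only
    by_cases h1 : (p : ℕ) = 0
    · rw [if_pos h1, dif_neg (by simp only [Fin.val_mk]; omega),
        if_pos (by simp only [Fin.val_mk])]
      exact Fin.ext (by simp only [Fin.val_mk]; omega)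
    · by_cases h2 : (p : ℕ) ≤ t
      · rw [if_neg h1, dif_pos h2, dif_pos (by simp only [Fin.val_mk]; omega)]
        exact Fin.ext (by simp only [Fin.val_mk]; omega)
      · rw [if_neg h1, dif_neg h2, dif_neg (by omega), if_neg (by omega)]

lemma cyc_lt {n : ℕ} {t : ℕ} (ht : t < n) (p : Fin n) (h : (p : ℕ) < t) :
    ((cyc t ht p : Fin n) : ℕ) = p + 1 := by
  simp only [cyc, Equiv.coe_fn_mk, dif_pos h]

lemma cyc_eq {n : ℕ} {t : ℕ} (ht : t < n) (p : Fin n) (h : (p : ℕ) = t) :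
    ((cyc t ht p : Fin n) : ℕ) = 0 := by
  simp only [cyc, Equiv.coe_fn_mk, dif_neg (by omega : ¬ (p:ℕ) < t), if_pos h]

lemma cyc_gt {n : ℕ} {t : ℕ} (ht : t < n) (p : Fin n) (h : t < (p : ℕ)) :
    ((cyc t ht p : Fin n) : ℕ) = p := by
  simp only [cyc, Equiv.coe_fn_mk, dif_neg (by omega : ¬ (p:ℕ) < t),
    if_neg (by omega : ¬ (p:ℕ) = t)]

end Stmt1Aux

namespace Stmt1Aux
open scoped ENNReal

/-- ENNReal version of `l2sq3`. -/
def l2sq3E {a b c : ℕ} (F : (Fin a → ℕ) → (Fin b → ℕ) → (Fin c → ℕ) → ℝ) : ℝ≥0∞ :=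
  ∑' p : (Fin a → ℕ) × (Fin b → ℕ) × (Fin c → ℕ), ENNReal.ofReal ((F p.1 p.2.1 p.2.2) ^ 2)

lemma l2sq3_eq_toReal {a b c : ℕ} (F : (Fin a → ℕ) → (Fin b → ℕ) → (Fin c → ℕ) → ℝ) :
    l2sq3 F = (l2sq3E F).toReal :=
  tsum_nonneg_eq_toReal (fun _ => sq_nonneg _)

lemma tsum_unique' {M : Type*} [AddCommMonoid M] [TopologicalSpace M]
    {β : Type*} [Unique β] (h : β → M) : ∑' u, h u = h default :=
  tsum_eq_single default (fun b hb => (hb (Subsingleton.elim b default)).elim)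

section marginal

variable {n : ℕ} {f : (Fin n → ℕ) → ℝ}

/-- `ℕ × (Fin (n-1) → ℕ) ≃ (Fin n → ℕ)`, matching `freeze`. -/
def e1 {n : ℕ} (hn : 1 ≤ n) : (ℕ × (Fin (n - 1) → ℕ)) ≃ (Fin n → ℕ) where
  toFun p := assemble3 1 (n - 1) 0 (fun _ => p.1) p.2 (fun _ => 0)
  invFun v := (v ⟨0, hn⟩, fun q => v ⟨q + 1, by have := q.isLt; omega⟩)
  left_inv p := by
    obtain ⟨j, b⟩ := p
    dsimp only
    refine Prod.ext ?_ (funext fun q => ?_) <;> dsimp only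
    · rw [assemble3_fst _ _ _ _ (by simp only [Fin.val_mk]; omega)]
    · rw [assemble3_snd _ _ _ _ (by simp only [Fin.val_mk]; omega)
        (by have := q.isLt; simp only [Fin.val_mk]; omega)]
      exact congrArg b (Fin.ext (by simp only [Fin.val_mk]; omega))
  right_inv v := by
    funext p
    have hp := p.isLt
    dsimp only
    by_cases h1 : (p : ℕ) < 1
    · rw [assemble3_fst _ _ _ _ h1]
      exact congrArg v (Fin.ext (by simp only [Fin.val_mk]; omega))
    · rw [assemble3_snd _ _ _ _ h1 (by omega)]
      exact congrArg v (Fin.ext (by simp only [Fin.val_mk]; omega))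

lemma freeze_e1 (hn : 1 ≤ n) (j : ℕ) (b : Fin (n - 1) → ℕ) :
    freeze f j b = f (e1 hn (j, b)) := rfl

lemma summable_freeze_sq (hn : 1 ≤ n) (hf : Summable fun x => (f x) ^ 2) (j : ℕ) :
    Summable fun b => (freeze f j b) ^ 2 := by
  have h2 : Summable fun p : ℕ × (Fin (n - 1) → ℕ) => (f (e1 hn p)) ^ 2 :=
    ((e1 hn).summable_iff (f := fun x => (f x) ^ 2)).2 hf
  exact h2.prod_factor j

lemma summable_influence (hn : 1 ≤ n) (hf : Summable fun x => (f x) ^ 2) :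
    Summable (influence f) := by
  have h2 : Summable fun p : ℕ × (Fin (n - 1) → ℕ) => (f (e1 hn p)) ^ 2 :=
    ((e1 hn).summable_iff (f := fun x => (f x) ^ 2)).2 hf
  have := (summable_prod_of_nonneg (f := fun p : ℕ × (Fin (n - 1) → ℕ) => (f (e1 hn p)) ^ 2)
    (fun p => sq_nonneg _)).1 h2
  exact this.2

lemma tsum_influence (hn : 1 ≤ n) (hf : Summable fun x => (f x) ^ 2) :
    ∑' j, influence f j = ∑' x, (f x) ^ 2 := by
  have h2 : Summable fun p : ℕ × (Fin (n - 1) → ℕ) => (f (e1 hn p)) ^ 2 :=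
    ((e1 hn).summable_iff (f := fun x => (f x) ^ 2)).2 hf
  have h3 : ∑' p : ℕ × (Fin (n - 1) → ℕ), (f (e1 hn p)) ^ 2 = ∑' x, (f x) ^ 2 :=
    (e1 hn).tsum_eq (fun x => (f x) ^ 2)
  rw [← h3, Summable.tsum_prod' h2 (fun j => h2.prod_factor j)]
  rfl

lemma influence_nonneg (f : (Fin n → ℕ) → ℝ) (j : ℕ) : 0 ≤ influence f j :=
  tsum_nonneg fun _ => sq_nonneg _

lemma influence_le (hn : 1 ≤ n) (hf : Summable fun x => (f x) ^ 2) (j : ℕ) :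
    influence f j ≤ ∑' x, (f x) ^ 2 := by
  rw [← tsum_influence hn hf]
  exact Summable.le_tsum (summable_influence hn hf) j (fun k _ => influence_nonneg f k)

lemma summable_influence_sq (hn : 1 ≤ n) (hf : Summable fun x => (f x) ^ 2) :
    Summable fun j => (influence f j) ^ 2 := by
  refine Summable.of_nonneg_of_le (fun j => sq_nonneg _) (fun j => ?_)
    ((summable_influence hn hf).mul_left (∑' x, (f x) ^ 2))
  rw [sq]
  exact mul_le_mul_of_nonneg_right (influence_le hn hf j) (influence_nonneg f j)

/-- ENNReal-valued influence identity. -/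
lemma ofReal_influence (hn : 1 ≤ n) (hf : Summable fun x => (f x) ^ 2) (j : ℕ) :
    ENNReal.ofReal (influence f j) = ∑' b : Fin (n - 1) → ℕ, ENNReal.ofReal ((freeze f j b) ^ 2) :=
  ENNReal.ofReal_tsum_of_nonneg (fun _ => sq_nonneg _) (summable_freeze_sq hn hf j)

end marginal

section selfcontr

variable {n : ℕ} {f : (Fin n → ℕ) → ℝ}

lemma starContr_self (hn : 1 ≤ n) (f : (Fin n → ℕ) → ℝ)
    (x : Fin (n - n) → ℕ) (y : Fin (n - (n - 1)) → ℕ) (z : Fin (n - n) → ℕ) :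
    starContr n n n (n - 1) f f x y z = influence f (y ⟨0, by omega⟩) := by
  unfold starContr influence
  refine tsum_congr fun a => ?_
  have key : ∀ w : Fin (n - n) → ℕ,
      (assemble3 (n - n) (n - (n - 1)) (n - 1) w y a : Fin n → ℕ)
        = assemble3 1 (n - 1) 0 (fun _ => y ⟨0, by omega⟩) a (fun _ => 0) := by
    intro w
    funext p
    have hp := p.isLt
    by_cases h2 : (p : ℕ) - (n - n) < n - (n - 1)
    · rw [assemble3_snd _ _ _ _ (by omega) h2, assemble3_fst _ _ _ _ (by omega)]
      exact congrArg y (Fin.ext (by simp only [Fin.val_mk]; omega))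
    · rw [assemble3_thd _ _ _ _ (by omega) h2 (by omega),
        assemble3_snd _ _ _ _ (by omega) (by omega)]
      exact congrArg a (Fin.ext (by simp only [Fin.val_mk]; omega))
  rw [key x, key z, ← sq]
  rfl

/-- collapse equiv for the self-contraction index type -/
def eColl (ha : n - n = 0) (hb : n - (n - 1) = 1) :
    ((Fin (n - n) → ℕ) × (Fin (n - (n - 1)) → ℕ) × (Fin (n - n) → ℕ)) ≃ ℕ where
  toFun p := p.2.1 ⟨0, by omega⟩
  invFun j := ((uniqueFun ha).default, eOne hb j, (uniqueFun ha).default)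
  left_inv p := by
    dsimp only
    haveI hU := uniqueFun ha
    refine Prod.ext (Subsingleton.elim _ _) (Prod.ext ?_ (Subsingleton.elim _ _))
    refine funext fun i => ?_
    show eOne hb (p.2.1 ⟨0, by omega⟩) i = p.2.1 i
    rw [eOne_apply hb]
    haveI : Subsingleton (Fin (n - (n - 1))) := by rw [hb]; infer_instance
    exact congrArg p.2.1 (Subsingleton.elim _ _)
  right_inv j := by
    dsimp only
    rw [eOne_apply hb]

lemma l2sq3_self (hn : 1 ≤ n) (f : (Fin n → ℕ) → ℝ) :
    l2sq3 (starContr n n n (n - 1) f f) = ∑' j : ℕ, (influence f j) ^ 2 := by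
  have ha : n - n = 0 := by omega
  have hb : n - (n - 1) = 1 := by omega
  unfold l2sq3
  rw [← (eColl ha hb).symm.tsum_eq
    (fun p : (Fin (n - n) → ℕ) × (Fin (n - (n - 1)) → ℕ) × (Fin (n - n) → ℕ) =>
      (starContr n n n (n - 1) f f p.1 p.2.1 p.2.2) ^ 2)]
  refine tsum_congr fun j => ?_
  rw [starContr_self hn f]
  exact congrArg (fun t => (influence f t) ^ 2)
    (show eOne hb j ⟨0, by omega⟩ = j from eOne_apply hb j _)

end selfcontr
end Stmt1Aux

namespace Stmt1Aux
open scoped ENNReal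

section partii

lemma freeze_assemble {n l : ℕ} (hl : 1 ≤ l) (hln : l ≤ n) {f : (Fin n → ℕ) → ℝ}
    (hsym : ∀ (σ : Equiv.Perm (Fin n)) (x : Fin n → ℕ), f (x ∘ σ) = f x)
    (i : Fin (n - l) → ℕ) (k : Fin (l - (l - 1)) → ℕ) (a : Fin (l - 1) → ℕ)
    (i' : Fin ((n - 1) - (l - 1)) → ℕ)
    (hi : ∀ p : Fin ((n - 1) - (l - 1)), i' p = i ⟨(p : ℕ), by have := p.isLt; omega⟩)
    (u : Fin ((l - 1) - (l - 1)) → ℕ) :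
    f (assemble3 (n - l) (l - (l - 1)) (l - 1) i k a)
      = freeze f (k ⟨0, by omega⟩)
          (assemble3 ((n - 1) - (l - 1)) ((l - 1) - (l - 1)) (l - 1) i' u a) := by
  have ht : n - l < n := by omega
  have key : (assemble3 (n - l) (l - (l - 1)) (l - 1) i k a : Fin n → ℕ)
      = (assemble3 1 (n - 1) 0 (fun _ => k ⟨0, by omega⟩)
          (assemble3 ((n - 1) - (l - 1)) ((l - 1) - (l - 1)) (l - 1) i' u a) (fun _ => 0))
        ∘ (cyc (n - l) ht) := by
    funext p
    have hp := p.isLt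
    rw [Function.comp_apply]
    by_cases h1 : (p : ℕ) < n - l
    · have hσ := cyc_lt ht p h1
      rw [assemble3_fst _ _ _ _ h1,
        assemble3_snd _ _ _ _ (by omega) (show ((cyc (n - l) ht p : Fin n) : ℕ) - 1 < n - 1 by omega),
        assemble3_fst _ _ _ _ (by simp only [Fin.val_mk]; omega), hi]
      exact congrArg i (Fin.ext (by simp only [Fin.val_mk]; omega))
    · by_cases h2 : (p : ℕ) = n - l
      · have hσ := cyc_eq ht p h2
        rw [assemble3_snd _ _ _ _ h1 (by omega), assemble3_fst _ _ _ _ (by omega)]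
        exact congrArg k (Fin.ext (by simp only [Fin.val_mk]; omega))
      · have hσ := cyc_gt ht p (by omega)
        rw [assemble3_thd _ _ _ _ h1 (by omega) (by omega),
          assemble3_snd _ _ _ _ (by omega) (by omega),
          assemble3_thd _ _ _ _ (by simp only [Fin.val_mk]; omega)
            (by simp only [Fin.val_mk]; omega) (by simp only [Fin.val_mk]; omega)]
        exact congrArg a (Fin.ext (by simp only [Fin.val_mk]; omega))
  rw [key, hsym]
  rfl

lemma l2sq3E_iter {a b c : ℕ} (hb : b = 0)
    (F : (Fin a → ℕ) → (Fin b → ℕ) → (Fin c → ℕ) → ℝ) :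
    l2sq3E F = ∑' x : Fin a → ℕ, ∑' z : Fin c → ℕ,
      ENNReal.ofReal ((F x (fun _ => 0) z) ^ 2) := by
  haveI : Unique (Fin b → ℕ) := uniqueFun hb
  unfold l2sq3E
  rw [ENNReal.tsum_prod']
  refine tsum_congr fun x => ?_
  rw [ENNReal.tsum_prod', tsum_unique']
  refine tsum_congr fun z => ?_
  exact congrArg (fun y : Fin b → ℕ => ENNReal.ofReal ((F x y z) ^ 2))
    (Subsingleton.elim _ _)

lemma ofReal_influence_iter {n l : ℕ} {f : (Fin n → ℕ) → ℝ} (hl : 1 ≤ l) (hln : l ≤ n)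
    (hf : Summable fun x => (f x) ^ 2) (j : ℕ) :
    ∑' x' : Fin ((n - 1) - (l - 1)) → ℕ, ∑' a : Fin (l - 1) → ℕ,
      ENNReal.ofReal ((freeze f j
        (assemble3 ((n - 1) - (l - 1)) ((l - 1) - (l - 1)) (l - 1) x' (fun _ => 0) a)) ^ 2)
      = ENNReal.ofReal (influence f j) := by
  have hn : 1 ≤ n := by omega
  haveI : Unique (Fin ((l - 1) - (l - 1)) → ℕ) := uniqueFun (by omega)
  rw [ofReal_influence hn hf j,
    ← (split3 ((n - 1) - (l - 1)) ((l - 1) - (l - 1)) (l - 1)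
        (show ((n - 1) - (l - 1)) + ((l - 1) - (l - 1)) + (l - 1) = n - 1 by omega)).tsum_eq
      (fun b => ENNReal.ofReal ((freeze f j b) ^ 2)),
    ENNReal.tsum_prod']
  refine tsum_congr fun x' => ?_
  rw [ENNReal.tsum_prod']
  conv_rhs => rw [tsum_unique']
  refine tsum_congr fun a => ?_
  exact congrArg (fun y : Fin ((l - 1) - (l - 1)) → ℕ => ENNReal.ofReal ((freeze f j
    (assemble3 ((n - 1) - (l - 1)) ((l - 1) - (l - 1)) (l - 1) x' y a)) ^ 2))
    (Subsingleton.elim _ _)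

lemma summable_slice {n l : ℕ} {f : (Fin n → ℕ) → ℝ} (hl : 1 ≤ l) (hln : l ≤ n)
    (hf : Summable fun x => (f x) ^ 2) (j : ℕ) (x' : Fin ((n - 1) - (l - 1)) → ℕ) :
    Summable fun a : Fin (l - 1) → ℕ => (freeze f j
      (assemble3 ((n - 1) - (l - 1)) ((l - 1) - (l - 1)) (l - 1) x' (fun _ => 0) a)) ^ 2 := by
  have hn : 1 ≤ n := by omega
  have h0 : Summable fun b => (freeze f j b) ^ 2 := summable_freeze_sq hn hf j
  have hinj : Function.Injective (fun a : Fin (l - 1) → ℕ =>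
      (split3 ((n - 1) - (l - 1)) ((l - 1) - (l - 1)) (l - 1)
        (show ((n - 1) - (l - 1)) + ((l - 1) - (l - 1)) + (l - 1) = n - 1 by omega))
        (x', (fun _ => 0), a)) := by
    intro a1 a2 h
    have h2 := (split3 ((n - 1) - (l - 1)) ((l - 1) - (l - 1)) (l - 1)
      (show ((n - 1) - (l - 1)) + ((l - 1) - (l - 1)) + (l - 1) = n - 1 by omega)).injective h
    simpa using congrArg (fun p => p.2.2) h2
  exact h0.comp_injective hinj

lemma Ej_le {n m l : ℕ} {f : (Fin n → ℕ) → ℝ} {g : (Fin m → ℕ) → ℝ}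
    (hl : 1 ≤ l) (hln : l ≤ n) (hlm : l ≤ m)
    (hf : Summable fun x => (f x) ^ 2) (hg : Summable fun x => (g x) ^ 2) (j : ℕ) :
    l2sq3E (starContr (n - 1) (m - 1) (l - 1) (l - 1) (freeze f j) (freeze g j))
      ≤ ENNReal.ofReal (influence f j) * ENNReal.ofReal (influence g j) := by
  rw [l2sq3E_iter (by omega) _, ← ofReal_influence_iter hl hln hf j,
    ← ofReal_influence_iter hl hlm hg j, ← ENNReal.tsum_mul_right]
  refine ENNReal.tsum_le_tsum fun x' => ?_
  rw [← ENNReal.tsum_mul_left]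
  refine ENNReal.tsum_le_tsum fun z' => ?_
  have hφ := summable_slice hl hln hf j x'
  have hψ := summable_slice hl hlm hg j z'
  have hcs := tsum_mul_sq_le hφ hψ
  calc ENNReal.ofReal ((starContr (n - 1) (m - 1) (l - 1) (l - 1)
        (freeze f j) (freeze g j) x' (fun _ => 0) z') ^ 2)
      ≤ ENNReal.ofReal ((∑' a, (freeze f j
          (assemble3 ((n - 1) - (l - 1)) ((l - 1) - (l - 1)) (l - 1) x' (fun _ => 0) a)) ^ 2)
        * ∑' a, (freeze g j
          (assemble3 ((m - 1) - (l - 1)) ((l - 1) - (l - 1)) (l - 1) z' (fun _ => 0) a)) ^ 2) :=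
        ENNReal.ofReal_le_ofReal hcs
    _ = ENNReal.ofReal (∑' a, (freeze f j
          (assemble3 ((n - 1) - (l - 1)) ((l - 1) - (l - 1)) (l - 1) x' (fun _ => 0) a)) ^ 2)
        * ENNReal.ofReal (∑' a, (freeze g j
          (assemble3 ((m - 1) - (l - 1)) ((l - 1) - (l - 1)) (l - 1) z' (fun _ => 0) a)) ^ 2) :=
        ENNReal.ofReal_mul (tsum_nonneg fun _ => sq_nonneg _)
    _ = _ := by
        rw [ENNReal.ofReal_tsum_of_nonneg (fun _ => sq_nonneg _) hφ,
          ENNReal.ofReal_tsum_of_nonneg (fun _ => sq_nonneg _) hψ]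

lemma keyEq {n m l : ℕ} {f : (Fin n → ℕ) → ℝ} {g : (Fin m → ℕ) → ℝ}
    (hl : 1 ≤ l) (hln : l ≤ n) (hlm : l ≤ m)
    (hsymf : ∀ (σ : Equiv.Perm (Fin n)) (x : Fin n → ℕ), f (x ∘ σ) = f x)
    (hsymg : ∀ (σ : Equiv.Perm (Fin m)) (x : Fin m → ℕ), g (x ∘ σ) = g x) :
    l2sq3E (starContr n m l (l - 1) f g)
      = ∑' j : ℕ, l2sq3E (starContr (n - 1) (m - 1) (l - 1) (l - 1)
          (freeze f j) (freeze g j)) := by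
  have h1 : l - (l - 1) = 1 := by omega
  have hA : (n - l) = (n - 1) - (l - 1) := by omega
  have hB : (m - l) = (m - 1) - (l - 1) := by omega
  calc l2sq3E (starContr n m l (l - 1) f g)
      = ∑' x : Fin (n - l) → ℕ, ∑' k : Fin (l - (l - 1)) → ℕ, ∑' z : Fin (m - l) → ℕ,
          ENNReal.ofReal ((starContr n m l (l - 1) f g x k z) ^ 2) := by
        unfold l2sq3E
        rw [ENNReal.tsum_prod']
        exact tsum_congr fun x => ENNReal.tsum_prod'
    _ = ∑' x : Fin (n - l) → ℕ, ∑' j : ℕ, ∑' z : Fin (m - l) → ℕ,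
          ENNReal.ofReal ((starContr n m l (l - 1) f g x (eOne h1 j) z) ^ 2) := by
        exact tsum_congr fun x => ((eOne h1).tsum_eq _).symm
    _ = ∑' j : ℕ, ∑' x : Fin (n - l) → ℕ, ∑' z : Fin (m - l) → ℕ,
          ENNReal.ofReal ((starContr n m l (l - 1) f g x (eOne h1 j) z) ^ 2) :=
        ENNReal.tsum_comm
    _ = ∑' j : ℕ, ∑' x' : Fin ((n - 1) - (l - 1)) → ℕ, ∑' z' : Fin ((m - 1) - (l - 1)) → ℕ,
          ENNReal.ofReal ((starContr (n - 1) (m - 1) (l - 1) (l - 1)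
            (freeze f j) (freeze g j) x' (fun _ => 0) z') ^ 2) := by
        refine tsum_congr fun j => ?_
        have hpt : ∀ (x : Fin (n - l) → ℕ) (z : Fin (m - l) → ℕ),
            ENNReal.ofReal ((starContr n m l (l - 1) f g x (eOne h1 j) z) ^ 2)
              = ENNReal.ofReal ((starContr (n - 1) (m - 1) (l - 1) (l - 1)
                  (freeze f j) (freeze g j) (eCast hA x) (fun _ => 0) (eCast hB z)) ^ 2) := by
          intro x z
          refine congrArg (fun t => ENNReal.ofReal (t ^ 2)) (tsum_congr fun a => ?_)
          rw [freeze_assemble hl hln hsymf x (eOne h1 j) a (eCast hA x) (fun p => rfl) (fun _ => 0),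
            freeze_assemble hl hlm hsymg z (eOne h1 j) a (eCast hB z) (fun p => rfl) (fun _ => 0),
            eOne_apply h1]
        calc ∑' x, ∑' z, ENNReal.ofReal ((starContr n m l (l - 1) f g x (eOne h1 j) z) ^ 2)
            = ∑' x, ∑' z, ENNReal.ofReal ((starContr (n - 1) (m - 1) (l - 1) (l - 1)
                (freeze f j) (freeze g j) (eCast hA x) (fun _ => 0) (eCast hB z)) ^ 2) :=
              tsum_congr fun x => tsum_congr fun z => hpt x z
          _ = ∑' x, ∑' z' : Fin ((m - 1) - (l - 1)) → ℕ,
                ENNReal.ofReal ((starContr (n - 1) (m - 1) (l - 1) (l - 1)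
                  (freeze f j) (freeze g j) (eCast hA x) (fun _ => 0) z') ^ 2) :=
              tsum_congr fun x => (eCast hB).tsum_eq
                (fun z' => ENNReal.ofReal ((starContr (n - 1) (m - 1) (l - 1) (l - 1)
                  (freeze f j) (freeze g j) (eCast hA x) (fun _ => 0) z') ^ 2))
          _ = _ := (eCast hA).tsum_eq
                (fun x' => ∑' z' : Fin ((m - 1) - (l - 1)) → ℕ,
                  ENNReal.ofReal ((starContr (n - 1) (m - 1) (l - 1) (l - 1)
                    (freeze f j) (freeze g j) x' (fun _ => 0) z') ^ 2))
    _ = _ := tsum_congr fun j => (l2sq3E_iter (by omega) _).symm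

lemma keyLe {n m l : ℕ} {f : (Fin n → ℕ) → ℝ} {g : (Fin m → ℕ) → ℝ}
    (hl : 1 ≤ l) (hln : l ≤ n) (hlm : l ≤ m)
    (hf : Summable fun x => (f x) ^ 2) (hg : Summable fun x => (g x) ^ 2) :
    ∑' j : ℕ, l2sq3E (starContr (n - 1) (m - 1) (l - 1) (l - 1) (freeze f j) (freeze g j))
      ≤ ENNReal.ofReal (∑' j : ℕ, influence f j * influence g j) := by
  have hn : 1 ≤ n := by omega
  have hm : 1 ≤ m := by omega
  have hnn : ∀ j, 0 ≤ influence f j * influence g j :=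
    fun j => mul_nonneg (influence_nonneg f j) (influence_nonneg g j)
  have hsum : Summable fun j => influence f j * influence g j :=
    Summable.of_nonneg_of_le hnn
      (fun j => mul_le_mul_of_nonneg_right (influence_le hn hf j) (influence_nonneg g j))
      ((summable_influence hm hg).mul_left _)
  rw [ENNReal.ofReal_tsum_of_nonneg hnn hsum]
  refine ENNReal.tsum_le_tsum fun j => ?_
  rw [ENNReal.ofReal_mul (influence_nonneg f j)]
  exact Ej_le hl hln hlm hf hg j

end partii
end Stmt1Aux

open Stmt1Aux

/-- Influence bounds for contraction norms: for
`f ∈ ℓ²₀(ℕ)^{∘n}` (`n ≥ 2`) and `g ∈ ℓ²₀(ℕ)^{∘m}` (`m ≥ 1`),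
(i) `sup_j (Inf_j f)² ≤ ‖f ⋆_n^{n-1} f‖² ≤ ‖f‖² ⬝ sup_j Inf_j f`, and
(ii) for `l = 1, …, min n m`,
`‖f ⋆_l^{l-1} g‖² = Σ_j ‖f(j,·) ⋆_{l-1}^{l-1} g(j,·)‖² ≤ ‖f ⋆_n^{n-1} f‖ ⬝ ‖g‖²`. -/
theorem stmt1 (n m : ℕ) (hn : 2 ≤ n) (hm : 1 ≤ m)
    (f : (Fin n → ℕ) → ℝ) (g : (Fin m → ℕ) → ℝ)
    (hf : MemEll20 n f) (hg : MemEll20 m g) :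
    ((⨆ j : ℕ, (influence f j) ^ 2) ≤ l2sq3 (starContr n n n (n - 1) f f) ∧
      l2sq3 (starContr n n n (n - 1) f f) ≤
        (∑' x, (f x) ^ 2) * ⨆ j : ℕ, influence f j) ∧
    (∀ l : ℕ, 1 ≤ l → l ≤ min n m →
      l2sq3 (starContr n m l (l - 1) f g) =
        (∑' j : ℕ, l2sq3 (starContr (n - 1) (m - 1) (l - 1) (l - 1)
          (freeze f j) (freeze g j))) ∧
      l2sq3 (starContr n m l (l - 1) f g) ≤
        l2norm3 (starContr n n n (n - 1) f f) * ∑' x, (g x) ^ 2) := by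
  obtain ⟨hfsum, hfsym, -⟩ := hf
  obtain ⟨hgsum, hgsym, -⟩ := hg
  have hn1 : 1 ≤ n := by omega
  have hL2 : l2sq3 (starContr n n n (n - 1) f f) = ∑' j, (influence f j) ^ 2 :=
    l2sq3_self hn1 f
  have hIsq : Summable fun j => (influence f j) ^ 2 := summable_influence_sq hn1 hfsum
  have hInn : ∀ j, 0 ≤ influence f j := influence_nonneg f
  have hIle : ∀ j, influence f j ≤ ∑' x, (f x) ^ 2 := influence_le hn1 hfsum
  have hbdd : BddAbove (Set.range (influence f)) :=
    ⟨∑' x, (f x) ^ 2, by rintro _ ⟨j, rfl⟩; exact hIle j⟩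
  constructor
  · constructor
    · rw [hL2]
      exact ciSup_le fun j => Summable.le_tsum hIsq j (fun k _ => sq_nonneg _)
    · rw [hL2]
      have h1 : ∀ j, (influence f j) ^ 2 ≤ influence f j * ⨆ j', influence f j' := fun j => by
        rw [sq]
        exact mul_le_mul_of_nonneg_left (le_ciSup hbdd j) (hInn j)
      calc ∑' j, (influence f j) ^ 2
          ≤ ∑' j, influence f j * ⨆ j', influence f j' :=
            Summable.tsum_le_tsum h1 hIsq ((summable_influence hn1 hfsum).mul_right _)
        _ = (∑' j, influence f j) * ⨆ j', influence f j' := tsum_mul_right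
        _ = (∑' x, (f x) ^ 2) * ⨆ j', influence f j' := by
            rw [tsum_influence hn1 hfsum]
  · intro l hl1 hlmin
    have hln : l ≤ n := le_trans hlmin (min_le_left _ _)
    have hlm : l ≤ m := le_trans hlmin (min_le_right _ _)
    have hEq := keyEq (f := f) (g := g) hl1 hln hlm hfsym hgsym
    have hLe := keyLe (f := f) (g := g) hl1 hln hlm hfsum hgsum
    have hT : (∑' j : ℕ, l2sq3E (starContr (n - 1) (m - 1) (l - 1) (l - 1)
        (freeze f j) (freeze g j))) ≠ ∞ := ne_top_of_le_ne_top ENNReal.ofReal_ne_top hLe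
    have hEqReal : l2sq3 (starContr n m l (l - 1) f g)
        = ∑' j : ℕ, l2sq3 (starContr (n - 1) (m - 1) (l - 1) (l - 1)
            (freeze f j) (freeze g j)) := by
      rw [l2sq3_eq_toReal, hEq,
        ENNReal.tsum_toReal_eq (fun j => ne_top_of_le_ne_top hT (ENNReal.le_tsum j))]
      exact tsum_congr fun j => (l2sq3_eq_toReal _).symm
    refine ⟨hEqReal, ?_⟩
    have step1 : l2sq3 (starContr n m l (l - 1) f g)
        ≤ ∑' j, influence f j * influence g j := by
      rw [l2sq3_eq_toReal]
      calc (l2sq3E (starContr n m l (l - 1) f g)).toReal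
          ≤ (ENNReal.ofReal (∑' j, influence f j * influence g j)).toReal :=
            ENNReal.toReal_mono ENNReal.ofReal_ne_top (hEq ▸ hLe)
        _ = _ := ENNReal.toReal_ofReal
            (tsum_nonneg fun j => mul_nonneg (hInn j) (influence_nonneg g j))
    refine step1.trans ?_
    have hgsq : Summable fun j => (influence g j) ^ 2 := summable_influence_sq hm hgsum
    refine (tsum_mul_le_sqrt (u := influence f) (v := influence g) hIsq hgsq).trans ?_
    have h2 : Real.sqrt (∑' j, (influence g j) ^ 2) ≤ ∑' j, influence g j :=
      sqrt_tsum_sq_le (influence_nonneg g) (summable_influence hm hgsum)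
    calc Real.sqrt (∑' j, (influence f j) ^ 2) * Real.sqrt (∑' j, (influence g j) ^ 2)
        ≤ Real.sqrt (∑' j, (influence f j) ^ 2) * ∑' j, influence g j :=
          mul_le_mul_of_nonneg_left h2 (Real.sqrt_nonneg _)
      _ = l2norm3 (starContr n n n (n - 1) f f) * ∑' x, (g x) ^ 2 := by
          rw [tsum_influence hm hgsum]
          unfold l2norm3
          rw [hL2]
end
end

section
/- Let f ∈ ℓ²₀(ℕ)^{∘n} with n ≥ 2. Then ‖f ⋆_1^0 f‖_{ℓ²(ℕ)^{⊗(2n−1)}} = ‖f ⋆_n^{n−1} f‖_{ℓ²(ℕ)}, and for every l = 2,…,n, ‖f ⋆_l^{l−1} f‖_{ℓ²(ℕ)^{⊗(2n−2l+1)}} ≤ ‖(f ⋆_{l−1}^{l−1} f) · 1_{Δ^c_{2(n−l+1)}}‖_{ℓ²(ℕ)^{⊗(2n−2l+2)}} ≤ ‖f ⋆_{l−1}^{l−1} f‖_{ℓ²(ℕ)^{⊗(2n−2l+2)}}. -/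
open MeasureTheory ProbabilityTheory Filter
open scoped ENNReal NNReal

noncomputable section
/-! ### Auxiliary lemmas -/

section Aux

open Function

/-- Cauchy–Schwarz for `tsum`. -/
lemma tsum_cauchy_schwarz {α : Type*} {u v : α → ℝ} (hu : Summable (fun a => u a ^ 2))
    (hv : Summable (fun a => v a ^ 2)) :
    (∑' a, u a * v a) ^ 2 ≤ (∑' a, u a ^ 2) * (∑' a, v a ^ 2) := by
  have habs : Summable (fun a => |u a * v a|) := by
    apply Summable.of_nonneg_of_le (fun a => abs_nonneg _) (fun a => ?_) ((hu.add hv).div_const 2)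
    nlinarith [sq_nonneg (|u a| - |v a|), abs_mul (u a) (v a), sq_abs (u a), sq_abs (v a)]
  have huv : Summable (fun a => u a * v a) := habs.of_abs
  refine le_of_tendsto' (Filter.Tendsto.pow huv.hasSum 2) (fun s => ?_)
  calc (∑ a ∈ s, u a * v a) ^ 2 ≤ (∑ a ∈ s, u a ^ 2) * (∑ a ∈ s, v a ^ 2) :=
        Finset.sum_mul_sq_le_sq_mul_sq s u v
    _ ≤ (∑' a, u a ^ 2) * (∑' a, v a ^ 2) := by
        apply mul_le_mul (Summable.sum_le_tsum s (fun a _ => sq_nonneg _) hu)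
          (Summable.sum_le_tsum s (fun a _ => sq_nonneg _) hv)
          (Finset.sum_nonneg (fun a _ => sq_nonneg _)) (tsum_nonneg (fun a => sq_nonneg _))

/-- A pointwise nonnegative real `tsum` equals the `toReal` of the `ℝ≥0∞`-valued `tsum`. -/
lemma tsum_nonneg_eq_toReal {α : Type*} {g : α → ℝ} (hg : ∀ a, 0 ≤ g a) :
    ∑' a, g a = (∑' a, ENNReal.ofReal (g a)).toReal := by
  by_cases h : Summable g
  · rw [← ENNReal.ofReal_tsum_of_nonneg hg h, ENNReal.toReal_ofReal (tsum_nonneg hg)]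
  · rw [tsum_eq_zero_of_not_summable h]
    by_cases htop : ∑' a, ENNReal.ofReal (g a) = ⊤
    · simp [htop]
    · exact absurd ((ENNReal.summable_toReal htop).congr
        (fun a => ENNReal.toReal_ofReal (hg a))) h

lemma asm_fst {n a b c : ℕ} (x : Fin a → ℕ) (y : Fin b → ℕ) (z : Fin c → ℕ) (p : Fin n)
    (h : (p : ℕ) < a) : assemble3 a b c x y z p = x ⟨p, h⟩ := by
  simp [assemble3, h]

lemma asm_snd {n a b c : ℕ} (x : Fin a → ℕ) (y : Fin b → ℕ) (z : Fin c → ℕ) (p : Fin n)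
    (h1 : ¬ (p : ℕ) < a) (h2 : (p : ℕ) - a < b) :
    assemble3 a b c x y z p = y ⟨(p : ℕ) - a, h2⟩ := by
  simp [assemble3, h1, h2]

lemma asm_thd {n a b c : ℕ} (x : Fin a → ℕ) (y : Fin b → ℕ) (z : Fin c → ℕ) (p : Fin n)
    (h1 : ¬ (p : ℕ) < a) (h2 : ¬ (p : ℕ) - a < b) (h3 : (p : ℕ) - a - b < c) :
    assemble3 a b c x y z p = z ⟨(p : ℕ) - a - b, h3⟩ := by
  simp [assemble3, h1, h2, h3]

/-- The first block is irrelevant when it is empty. -/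
lemma asm_fst_empty {n a b c : ℕ} (ha : a = 0) (x x' : Fin a → ℕ) (y : Fin b → ℕ)
    (z : Fin c → ℕ) : assemble3 (n := n) a b c x y z = assemble3 a b c x' y z := by
  subst ha; funext p; unfold assemble3; split_ifs <;> first | rfl | omega

/-- The middle block is irrelevant when it is empty. -/
lemma asm_snd_empty {n a b c : ℕ} (hb : b = 0) (x : Fin a → ℕ) (y y' : Fin b → ℕ)
    (z : Fin c → ℕ) : assemble3 (n := n) a b c x y z = assemble3 a b c x y' z := by
  subst hb; funext p; unfold assemble3; split_ifs <;> first | rfl | omega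

/-- The last block is irrelevant when it is empty. -/
lemma asm_thd_empty {n a b c : ℕ} (hc : c = 0) (x : Fin a → ℕ) (y : Fin b → ℕ)
    (z z' : Fin c → ℕ) : assemble3 (n := n) a b c x y z = assemble3 a b c x y z' := by
  subst hc; funext p; unfold assemble3; split_ifs <;> first | rfl | omega

/-- Pairing map used for the `⋆_{l-1}^{l-1}` contraction. -/
def psi2 (n l : ℕ) (p : (Fin (n - (l - 1)) → ℕ) × (Fin (l - 1) → ℕ)) : Fin n → ℕ :=
  assemble3 (n - (l - 1)) ((l - 1) - (l - 1)) (l - 1) p.1 (fun _ => 0) p.2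

lemma psi2_inj (n l : ℕ) (h1l : 1 ≤ l) (hln : l ≤ n) : Function.Injective (psi2 n l) := by
  rintro ⟨x, z⟩ ⟨x', z'⟩ h
  simp only [psi2] at h
  have hx : x = x' := by
    funext q
    have hq := q.isLt
    have := congrFun h ⟨(q : ℕ), by omega⟩
    rw [asm_fst _ _ _ _ (by simpa using hq), asm_fst _ _ _ _ (by simpa using hq)] at this
    simpa using this
  have hz : z = z' := by
    funext q
    have hq := q.isLt
    have := congrFun h ⟨n - (l - 1) + (q : ℕ), by omega⟩
    rw [asm_thd _ _ _ _ (by simp <;> omega) (by simp <;> omega) (by simp <;> omega),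
        asm_thd _ _ _ _ (by simp <;> omega) (by simp <;> omega) (by simp <;> omega)] at this
    rwa [show (⟨(↑(⟨n - (l - 1) + (q : ℕ), by omega⟩ : Fin n) : ℕ) - (n - (l - 1)) -
      ((l - 1) - (l - 1)), by simp <;> omega⟩ : Fin (l - 1)) = q from Fin.ext (by simp <;> omega)]
      at this
  simp [hx, hz]

/-- Extension of a block of `n - l` variables by the single identified variable. -/
def extv (n l : ℕ) (i : Fin (n - l) → ℕ) (k : Fin (l - (l - 1)) → ℕ) :
    Fin (n - (l - 1)) → ℕ := fun q =>
  if h : (q : ℕ) < n - l then i ⟨q, h⟩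
  else if h2 : 0 < l - (l - 1) then k ⟨0, h2⟩ else 0

end Aux


/-- Collapse a `Unique` middle factor of a triple. -/
def collapseMid {α κ β : Type*} [Unique κ] : (α × κ × β) ≃ (α × β) where
  toFun p := (p.1, p.2.2)
  invFun q := (q.1, default, q.2)
  left_inv p := by obtain ⟨a, k, b⟩ := p; simp [Subsingleton.elim (default : κ) k]
  right_inv q := rfl


def cycF (n : ℕ) (p : Fin n) : Fin n :=
  if h : (p : ℕ) + 1 < n then ⟨(p : ℕ) + 1, h⟩ else ⟨0, by have := p.isLt; omega⟩

def cycI (n : ℕ) (p : Fin n) : Fin n :=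
  if _h : (p : ℕ) = 0 then ⟨n - 1, by have := p.isLt; omega⟩
  else ⟨(p : ℕ) - 1, by have := p.isLt; omega⟩

/-- The cyclic permutation `p ↦ p + 1 (mod n)`. -/
def cycPerm (n : ℕ) : Equiv.Perm (Fin n) where
  toFun := cycF n
  invFun := cycI n
  left_inv := by
    intro p
    have hp := p.isLt
    unfold cycF cycI
    by_cases h : (p : ℕ) + 1 < n
    · rw [dif_pos h, dif_neg (by simp)]
      exact Fin.ext (by simp)
    · rw [dif_neg h, dif_pos (by simp)]
      exact Fin.ext (by simp <;> omega)
  right_inv := by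
    intro p
    have hp := p.isLt
    unfold cycF cycI
    by_cases h : (p : ℕ) = 0
    · rw [dif_pos h, dif_neg (by simp <;> omega)]
      exact Fin.ext (by simp <;> omega)
    · rw [dif_neg h, dif_pos (by simp <;> omega)]
      exact Fin.ext (by simp <;> omega)

/-- The vector `(i, k)` of `n` variables. -/
def uvec (n : ℕ) (i : Fin (n - 1) → ℕ) (k : Fin (1 - 0) → ℕ) : Fin n → ℕ :=
  assemble3 (n - 1) (1 - 0) 0 i k (fun _ => 0)

/-- The vector `(k, a)` of `n` variables. -/
def wvec (n : ℕ) (k : Fin (n - (n - 1)) → ℕ) (a : Fin (n - 1) → ℕ) : Fin n → ℕ :=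
  assemble3 (n - n) (n - (n - 1)) (n - 1) (fun _ => 0) k a

lemma wvec_inj (n : ℕ) (hn : 2 ≤ n) (k : Fin (n - (n - 1)) → ℕ) :
    Function.Injective (wvec n k) := by
  intro a a' h
  simp only [wvec] at h
  funext q
  have hq := q.isLt
  have := congrFun h ⟨n - (n - 1) + (q : ℕ), by omega⟩
  rw [asm_thd _ _ _ _ (by simp <;> omega) (by simp <;> omega) (by simp <;> omega),
      asm_thd _ _ _ _ (by simp <;> omega) (by simp <;> omega) (by simp <;> omega)] at this
  rwa [show (⟨(↑(⟨n - (n - 1) + (q : ℕ), by omega⟩ : Fin n) : ℕ) - (n - n) - (n - (n - 1)),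
    by simp <;> omega⟩ : Fin (n - 1)) = q from Fin.ext (by simp <;> omega)] at this

lemma uvec_eq (n : ℕ) (hn : 2 ≤ n) (i : Fin (n - 1) → ℕ) (k : Fin (1 - 0) → ℕ)
    (k2 : Fin (n - (n - 1)) → ℕ) (hk : ∀ q, k2 q = k ⟨0, by omega⟩) :
    uvec n i k = (wvec n k2 i) ∘ (cycPerm n) := by
  funext p
  have hp := p.isLt
  simp only [uvec, wvec, Function.comp_apply, cycPerm, Equiv.coe_fn_mk, cycF]
  by_cases h1 : (p : ℕ) < n - 1
  · rw [dif_pos (show (p : ℕ) + 1 < n by omega)]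
    rw [asm_fst _ _ _ _ h1,
        asm_thd _ _ _ _ (by simp <;> omega) (by simp <;> omega) (by simp <;> omega)]
    exact congrArg i (Fin.ext (by simp <;> omega))
  · rw [dif_neg (show ¬ ((p : ℕ) + 1 < n) by omega)]
    rw [asm_snd _ _ _ _ h1 (show (p : ℕ) - (n - 1) < 1 - 0 by omega),
        asm_snd _ _ _ _ (by simp <;> omega) (by simp <;> omega)]
    rw [hk]
    exact congrArg k (Fin.ext (by simp <;> omega))

/-- Insert `Unique` factors around a type. -/
def tripleEquiv {α κ β : Type*} [Subsingleton α] [Subsingleton β] (a0 : α) (b0 : β) :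
    κ ≃ (α × κ × β) where
  toFun k := (a0, k, b0)
  invFun p := p.2.1
  left_inv k := rfl
  right_inv p := Prod.ext (Subsingleton.elim _ _) (Prod.ext rfl (Subsingleton.elim _ _))

/-- The two incarnations of a single variable. -/
def oneEquiv (n : ℕ) (hn : 2 ≤ n) : (Fin (1 - 0) → ℕ) ≃ (Fin (n - (n - 1)) → ℕ) where
  toFun k := fun _ => k ⟨0, by omega⟩
  invFun k := fun _ => k ⟨0, by omega⟩
  left_inv k := funext fun q => congrArg k (Fin.ext (by have := q.isLt; omega))
  right_inv k := funext fun q => congrArg k (Fin.ext (by have := q.isLt; omega))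

lemma tsum_triple_factor {A K : Type*} (φ : A → K → ℝ≥0∞) :
    ∑' p : A × K × A, φ p.1 p.2.1 * φ p.2.2 p.2.1
      = ∑' k : K, (∑' i : A, φ i k) * ∑' j : A, φ j k := by
  calc ∑' p : A × K × A, φ p.1 p.2.1 * φ p.2.2 p.2.1
      = ∑' i : A, ∑' q : K × A, φ i q.1 * φ q.2 q.1 :=
        ENNReal.tsum_prod (f := fun (i : A) (q : K × A) => φ i q.1 * φ q.2 q.1)
    _ = ∑' i : A, ∑' k : K, ∑' j : A, φ i k * φ j k :=
        tsum_congr fun i => ENNReal.tsum_prod (f := fun k j => φ i k * φ j k)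
    _ = ∑' k : K, ∑' i : A, ∑' j : A, φ i k * φ j k := ENNReal.tsum_comm
    _ = ∑' k : K, ∑' i : A, φ i k * ∑' j : A, φ j k :=
        tsum_congr fun k => tsum_congr fun i => ENNReal.tsum_mul_left
    _ = ∑' k : K, (∑' i : A, φ i k) * ∑' j : A, φ j k :=
        tsum_congr fun k => ENNReal.tsum_mul_right

set_option maxHeartbeats 2000000 in
theorem part1 (n : ℕ) (hn : 2 ≤ n) (f : (Fin n → ℕ) → ℝ) (hf : MemEll20 n f) :
    l2norm3 (starContr n n 1 0 f f) = l2norm3 (starContr n n n (n - 1) f f) := by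
  obtain ⟨hfs, hsym, hdiag⟩ := hf
  haveI : IsEmpty (Fin (n - n)) := by rw [Nat.sub_self]; infer_instance
  have hF : ∀ (i : Fin (n - 1) → ℕ) (k : Fin (1 - 0) → ℕ) (j : Fin (n - 1) → ℕ),
      starContr n n 1 0 f f i k j = f (uvec n i k) * f (uvec n j k) := by
    intro i k j
    simp only [starContr]
    rw [tsum_eq_single (fun _ => 0 : Fin 0 → ℕ) (fun b hb => absurd (Subsingleton.elim b _) hb)]
    rfl
  have hwsum : ∀ k2, Summable (fun a : Fin (n - 1) → ℕ => f (wvec n k2 a) ^ 2) :=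
    fun k2 => hfs.comp_injective (wvec_inj n hn k2)
  have hG : ∀ (x : Fin (n - n) → ℕ) (k2 : Fin (n - (n - 1)) → ℕ) (y : Fin (n - n) → ℕ),
      starContr n n n (n - 1) f f x k2 y = ∑' a : Fin (n - 1) → ℕ, f (wvec n k2 a) ^ 2 := by
    intro x k2 y
    simp only [starContr]
    refine tsum_congr fun a => ?_
    rw [asm_fst_empty (by omega) x (fun _ => 0) k2 a,
        asm_fst_empty (by omega) y (fun _ => 0) k2 a]
    exact (pow_two _).symm
  rw [l2norm3, l2norm3]
  congr 1
  rw [l2sq3, l2sq3, tsum_nonneg_eq_toReal (fun _ => sq_nonneg _),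
      tsum_nonneg_eq_toReal (fun _ => sq_nonneg _)]
  congr 1
  have hE1 : ∑' p : (Fin (n - 1) → ℕ) × (Fin (1 - 0) → ℕ) × (Fin (n - 1) → ℕ),
      ENNReal.ofReal ((starContr n n 1 0 f f p.1 p.2.1 p.2.2) ^ 2)
      = ∑' k : Fin (1 - 0) → ℕ, (∑' i : Fin (n - 1) → ℕ,
          ENNReal.ofReal (f (uvec n i k) ^ 2)) *
          ∑' j : Fin (n - 1) → ℕ, ENNReal.ofReal (f (uvec n j k) ^ 2) :=
    (tsum_congr fun p => by
      rw [hF p.1 p.2.1 p.2.2, mul_pow, ENNReal.ofReal_mul (sq_nonneg _)]).trans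
    (tsum_triple_factor fun i k => ENNReal.ofReal (f (uvec n i k) ^ 2))
  have hE2 : ∑' p : (Fin (n - n) → ℕ) × (Fin (n - (n - 1)) → ℕ) × (Fin (n - n) → ℕ),
      ENNReal.ofReal ((starContr n n n (n - 1) f f p.1 p.2.1 p.2.2) ^ 2)
      = ∑' k2 : Fin (n - (n - 1)) → ℕ,
          (∑' a : Fin (n - 1) → ℕ, ENNReal.ofReal (f (wvec n k2 a) ^ 2)) ^ 2 := by
    refine ((Equiv.tsum_eq (tripleEquiv (α := Fin (n - n) → ℕ) (β := Fin (n - n) → ℕ)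
        (fun _ => 0) (fun _ => 0)) _).symm.trans (tsum_congr fun k2 => ?_))
    simp only [tripleEquiv, Equiv.coe_fn_mk]
    rw [hG, ENNReal.ofReal_pow (tsum_nonneg fun _ => sq_nonneg _),
        ENNReal.ofReal_tsum_of_nonneg (fun a => sq_nonneg _) (hwsum k2)]
  rw [hE1, hE2]
  rw [← Equiv.tsum_eq (oneEquiv n hn) (fun k2 => (∑' a : Fin (n - 1) → ℕ,
      ENNReal.ofReal (f (wvec n k2 a) ^ 2)) ^ 2)]
  refine tsum_congr fun k => ?_
  have hterm : ∀ i : Fin (n - 1) → ℕ,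
      ENNReal.ofReal (f (uvec n i k) ^ 2)
        = ENNReal.ofReal (f (wvec n (oneEquiv n hn k) i) ^ 2) := by
    intro i
    rw [uvec_eq n hn i k (oneEquiv n hn k) (fun q => rfl), hsym]
  show _ = (∑' a : Fin (n - 1) → ℕ,
      ENNReal.ofReal (f (wvec n (oneEquiv n hn k) a) ^ 2)) ^ 2
  rw [pow_two]
  exact congrArg₂ (· * ·) (tsum_congr hterm) (tsum_congr hterm)

set_option maxHeartbeats 2000000 in
theorem part2 (n : ℕ) (f : (Fin n → ℕ) → ℝ) (hf : MemEll20 n f)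
    (l : ℕ) (h2l : 2 ≤ l) (hln : l ≤ n) :
    l2norm3 (starContr n n l (l - 1) f f) ≤
      l2norm3 (fun i k j =>
        if Function.Injective (Sum.elim i j) then 0
        else starContr n n (l - 1) (l - 1) f f i k j) ∧
    l2norm3 (fun i k j =>
        if Function.Injective (Sum.elim i j) then 0
        else starContr n n (l - 1) (l - 1) f f i k j) ≤
      l2norm3 (starContr n n (l - 1) (l - 1) f f) := by
  obtain ⟨hfs, hsym, hdiag⟩ := hf
  haveI : IsEmpty (Fin ((l - 1) - (l - 1))) := by rw [Nat.sub_self]; infer_instance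
  have hSumPair : Summable (fun p : (Fin (n - (l - 1)) → ℕ) × (Fin (l - 1) → ℕ) =>
      f (psi2 n l p) ^ 2) := hfs.comp_injective (psi2_inj n l (by omega) hln)
  have hpr := (summable_prod_of_nonneg
      (f := fun p : (Fin (n - (l - 1)) → ℕ) × (Fin (l - 1) → ℕ) => f (psi2 n l p) ^ 2)
      (fun _ => sq_nonneg _)).1 hSumPair
  have hslice : ∀ i, Summable (fun a : Fin (l - 1) → ℕ => f (psi2 n l (i, a)) ^ 2) := hpr.1
  set S : (Fin (n - (l - 1)) → ℕ) → ℝ :=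
      fun i => ∑' a : Fin (l - 1) → ℕ, f (psi2 n l (i, a)) ^ 2 with hSdef
  have hSsum : Summable S := hpr.2
  have hSnn : ∀ i, 0 ≤ S i := fun i => tsum_nonneg (fun a => sq_nonneg _)
  have hGeq : ∀ (i : Fin (n - (l - 1)) → ℕ) (k : Fin ((l - 1) - (l - 1)) → ℕ)
      (j : Fin (n - (l - 1)) → ℕ),
      starContr n n (l - 1) (l - 1) f f i k j
        = ∑' a : Fin (l - 1) → ℕ, f (psi2 n l (i, a)) * f (psi2 n l (j, a)) := by
    intro i k j
    simp only [starContr]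
    refine tsum_congr fun a => ?_
    rw [asm_snd_empty (by omega) i k (fun _ => 0) a,
        asm_snd_empty (by omega) j k (fun _ => 0) a]
    rfl
  have hCS : ∀ (i : Fin (n - (l - 1)) → ℕ) (k : Fin ((l - 1) - (l - 1)) → ℕ)
      (j : Fin (n - (l - 1)) → ℕ),
      (starContr n n (l - 1) (l - 1) f f i k j) ^ 2 ≤ S i * S j := by
    intro i k j
    rw [hGeq i k j]
    exact tsum_cauchy_schwarz (hslice i) (hslice j)
  have hprod : Summable (fun p : (Fin (n - (l - 1)) → ℕ) × (Fin ((l - 1) - (l - 1)) → ℕ) ×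
      (Fin (n - (l - 1)) → ℕ) => S p.1 * S p.2.2) := by
    have h2 : Summable (fun q : (Fin (n - (l - 1)) → ℕ) × (Fin (n - (l - 1)) → ℕ) =>
        S q.1 * S q.2) := hSsum.mul_of_nonneg hSsum hSnn hSnn
    exact (Equiv.summable_iff collapseMid).2 h2
  have hSummG : Summable (fun p : (Fin (n - (l - 1)) → ℕ) × (Fin ((l - 1) - (l - 1)) → ℕ) ×
      (Fin (n - (l - 1)) → ℕ) => (starContr n n (l - 1) (l - 1) f f p.1 p.2.1 p.2.2) ^ 2) :=
    Summable.of_nonneg_of_le (fun p => sq_nonneg _) (fun p => hCS p.1 p.2.1 p.2.2) hprod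
  have hmle : ∀ p : (Fin (n - (l - 1)) → ℕ) × (Fin ((l - 1) - (l - 1)) → ℕ) ×
      (Fin (n - (l - 1)) → ℕ),
      ((if Function.Injective (Sum.elim p.1 p.2.2) then 0
        else starContr n n (l - 1) (l - 1) f f p.1 p.2.1 p.2.2)) ^ 2 ≤
      (starContr n n (l - 1) (l - 1) f f p.1 p.2.1 p.2.2) ^ 2 := by
    intro p
    split_ifs with h
    · simpa using sq_nonneg _
    · exact le_rfl
  have hSummGm : Summable (fun p : (Fin (n - (l - 1)) → ℕ) × (Fin ((l - 1) - (l - 1)) → ℕ) ×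
      (Fin (n - (l - 1)) → ℕ) =>
      ((if Function.Injective (Sum.elim p.1 p.2.2) then 0
        else starContr n n (l - 1) (l - 1) f f p.1 p.2.1 p.2.2)) ^ 2) :=
    Summable.of_nonneg_of_le (fun p => sq_nonneg _) hmle hSummG
  -- the key vector identity
  have hΦval : ∀ (i : Fin (n - l) → ℕ) (k : Fin (l - (l - 1)) → ℕ) (a : Fin (l - 1) → ℕ),
      assemble3 (n := n) (n - l) (l - (l - 1)) (l - 1) i k a
        = psi2 n l (extv n l i k, a) := by
    intro i k a
    funext p
    have hp := p.isLt
    simp only [psi2]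
    by_cases h1 : (p : ℕ) < n - l
    · rw [asm_fst _ _ _ _ h1, asm_fst _ _ _ _ (show (p : ℕ) < n - (l - 1) by omega)]
      simp only [extv]
      rw [dif_pos h1]
    · by_cases h2 : (p : ℕ) - (n - l) < l - (l - 1)
      · rw [asm_snd _ _ _ _ h1 h2, asm_fst _ _ _ _ (show (p : ℕ) < n - (l - 1) by omega)]
        simp only [extv]
        rw [dif_neg h1, dif_pos (show 0 < l - (l - 1) by omega)]
        exact congrArg k (Fin.ext (by simp <;> omega))
      · have h3 : (p : ℕ) - (n - l) - (l - (l - 1)) < l - 1 := by omega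
        rw [asm_thd _ _ _ _ h1 h2 h3,
            asm_thd _ _ _ _ (show ¬ (p : ℕ) < n - (l - 1) by omega)
              (show ¬ ((p : ℕ) - (n - (l - 1)) < (l - 1) - (l - 1)) by omega)
              (show (p : ℕ) - (n - (l - 1)) - ((l - 1) - (l - 1)) < l - 1 by omega)]
        exact congrArg a (Fin.ext (by simp <;> omega))
  have hFval : ∀ (i : Fin (n - l) → ℕ) (k : Fin (l - (l - 1)) → ℕ) (j : Fin (n - l) → ℕ),
      starContr n n l (l - 1) f f i k j
        = starContr n n (l - 1) (l - 1) f f (extv n l i k) (fun _ => 0) (extv n l j k) := by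
    intro i k j
    calc starContr n n l (l - 1) f f i k j
        = ∑' a : Fin (l - 1) → ℕ,
            f (psi2 n l (extv n l i k, a)) * f (psi2 n l (extv n l j k, a)) := by
          simp only [starContr]
          exact tsum_congr fun a => by rw [hΦval i k a, hΦval j k a]
      _ = starContr n n (l - 1) (l - 1) f f (extv n l i k) (fun _ => 0) (extv n l j k) :=
          (hGeq _ _ _).symm
  have h0 : 0 < l - (l - 1) := by omega
  have hnl : n - l < n - (l - 1) := by omega
  have hextval : ∀ (i : Fin (n - l) → ℕ) (k : Fin (l - (l - 1)) → ℕ),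
      extv n l i k ⟨n - l, hnl⟩ = k ⟨0, h0⟩ := by
    intro i k
    simp only [extv]
    rw [dif_neg (by simp), dif_pos h0]
  have hmask : ∀ (i : Fin (n - l) → ℕ) (k : Fin (l - (l - 1)) → ℕ) (j : Fin (n - l) → ℕ),
      ¬ Function.Injective (Sum.elim (extv n l i k) (extv n l j k)) := by
    intro i k j hinj
    have hval : Sum.elim (extv n l i k) (extv n l j k) (Sum.inl ⟨n - l, hnl⟩)
        = Sum.elim (extv n l i k) (extv n l j k) (Sum.inr ⟨n - l, hnl⟩) := by
      simp only [Sum.elim_inl, Sum.elim_inr, hextval]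
    exact Sum.inl_ne_inr (hinj hval)
  have hΦinj : Function.Injective (fun p : (Fin (n - l) → ℕ) × (Fin (l - (l - 1)) → ℕ) ×
      (Fin (n - l) → ℕ) =>
      ((extv n l p.1 p.2.1, (fun _ => 0 : Fin ((l - 1) - (l - 1)) → ℕ),
        extv n l p.2.2 p.2.1) :
        (Fin (n - (l - 1)) → ℕ) × (Fin ((l - 1) - (l - 1)) → ℕ) ×
        (Fin (n - (l - 1)) → ℕ))) := by
    rintro ⟨i, k, j⟩ ⟨i', k', j'⟩ h
    simp only [Prod.mk.injEq] at h
    obtain ⟨h1, -, h3⟩ := h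
    have hk : k = k' := by
      funext q
      have hq := q.isLt
      have heval := congrFun h1 ⟨n - l, hnl⟩
      rw [hextval, hextval] at heval
      have hq0 : q = ⟨0, h0⟩ := Fin.ext (by omega)
      rw [hq0]; exact heval
    have hi : i = i' := by
      funext q
      have hq := q.isLt
      have heval := congrFun h1 ⟨(q : ℕ), by omega⟩
      simp only [extv] at heval
      rw [dif_pos (by simpa using hq), dif_pos (by simpa using hq)] at heval
      simpa using heval
    have hj : j = j' := by
      funext q
      have hq := q.isLt
      have heval := congrFun h3 ⟨(q : ℕ), by omega⟩
      simp only [extv] at heval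
      rw [dif_pos (by simpa using hq), dif_pos (by simpa using hq)] at heval
      simpa using heval
    simp [hi, hj, hk]
  have hmaskval : ∀ p : (Fin (n - l) → ℕ) × (Fin (l - (l - 1)) → ℕ) × (Fin (n - l) → ℕ),
      (starContr n n l (l - 1) f f p.1 p.2.1 p.2.2) ^ 2
        = ((if Function.Injective (Sum.elim (extv n l p.1 p.2.1) (extv n l p.2.2 p.2.1)) then 0
            else starContr n n (l - 1) (l - 1) f f (extv n l p.1 p.2.1) (fun _ => 0)
              (extv n l p.2.2 p.2.1))) ^ 2 := by
    rintro ⟨i, k, j⟩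
    simp only [if_neg (hmask i k j)]
    rw [hFval i k j]
  have hSummF : Summable (fun p : (Fin (n - l) → ℕ) × (Fin (l - (l - 1)) → ℕ) ×
      (Fin (n - l) → ℕ) => (starContr n n l (l - 1) f f p.1 p.2.1 p.2.2) ^ 2) := by
    refine Summable.congr (hSummGm.comp_injective hΦinj) ?_
    intro p
    exact (hmaskval p).symm
  constructor
  · simp only [l2norm3, l2sq3]
    apply Real.sqrt_le_sqrt
    exact Summable.tsum_le_tsum_of_inj _ hΦinj (fun c _ => sq_nonneg _)
      (fun p => le_of_eq (hmaskval p)) hSummF hSummGm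
  · simp only [l2norm3, l2sq3]
    apply Real.sqrt_le_sqrt
    exact Summable.tsum_le_tsum hmle hSummGm hSummG

/-- For `f ∈ ℓ²₀(ℕ)^{∘n}`, `n ≥ 2`:
`‖f ⋆_1^0 f‖ = ‖f ⋆_n^{n-1} f‖` and, for `l = 2, …, n`,
`‖f ⋆_l^{l-1} f‖ ≤ ‖(f ⋆_{l-1}^{l-1} f) ⬝ 1_{Δᶜ}‖ ≤ ‖f ⋆_{l-1}^{l-1} f‖`. -/
theorem stmt2 (n : ℕ) (hn : 2 ≤ n)
    (f : (Fin n → ℕ) → ℝ) (hf : MemEll20 n f) :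
    l2norm3 (starContr n n 1 0 f f) = l2norm3 (starContr n n n (n - 1) f f) ∧
    (∀ l : ℕ, 2 ≤ l → l ≤ n →
      l2norm3 (starContr n n l (l - 1) f f) ≤
        l2norm3 (fun i k j =>
          if Function.Injective (Sum.elim i j) then 0
          else starContr n n (l - 1) (l - 1) f f i k j) ∧
      l2norm3 (fun i k j =>
          if Function.Injective (Sum.elim i j) then 0
          else starContr n n (l - 1) (l - 1) f f i k j) ≤
        l2norm3 (starContr n n (l - 1) (l - 1) f f)) :=
  ⟨part1 n hn f hf, fun l h2l hln => part2 n f hf l h2l hln⟩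
end
end

section
/- (Chain rule) Let F be a σ(X)-measurable random variable and let f: ℝ → ℝ be thrice differentiable with bounded third derivative. Then for every k ∈ ℕ, P-almost surely: | D_k f(F) − f′(F) D_kF + (1/2)( f″(F_k^+) + f″(F_k^-) ) (D_kF)² X_k | ≤ (10/3) · ‖f‴‖_∞ · |D_kF|³. -/
open MeasureTheory ProbabilityTheory Filter
open scoped ENNReal NNReal

noncomputable section
/-- The Rademacher law `½(δ₁ + δ₋₁)`. -/
def radLaw : Measure ℝ := (2⁻¹ : ℝ≥0∞) • (Measure.dirac (1 : ℝ) + Measure.dirac (-1))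

/-- `X` is an i.i.d. Rademacher sequence on `(Ω, P)`. -/
structure IsRademacher {Ω : Type*} [MeasurableSpace Ω] (P : Measure Ω)
    (X : ℕ → Ω → ℝ) : Prop where
  meas : ∀ i, Measurable (X i)
  indep : iIndepFun X P
  law : ∀ i, P.map (X i) = radLaw

/-- The σ(X)-measurable random variable `F = φ(X)`. -/
def valF {Ω : Type*} (X : ℕ → Ω → ℝ) (φ : (ℕ → ℝ) → ℝ) (ω : Ω) : ℝ :=
  φ (fun n => X n ω)

/-- `F_k^+`: `F` evaluated on the sequence whose `k`-th coordinate is set to `+1`. -/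
def valFplus {Ω : Type*} (X : ℕ → Ω → ℝ) (φ : (ℕ → ℝ) → ℝ) (k : ℕ) (ω : Ω) : ℝ :=
  φ (Function.update (fun n => X n ω) k 1)

/-- `F_k^-`: `F` evaluated on the sequence whose `k`-th coordinate is set to `-1`. -/
def valFminus {Ω : Type*} (X : ℕ → Ω → ℝ) (φ : (ℕ → ℝ) → ℝ) (k : ℕ) (ω : Ω) : ℝ :=
  φ (Function.update (fun n => X n ω) k (-1))

/-- The discrete gradient `D_k F = (F_k^+ - F_k^-) / 2`. -/
def gradD {Ω : Type*} (X : ℕ → Ω → ℝ) (φ : (ℕ → ℝ) → ℝ) (k : ℕ) (ω : Ω) : ℝ :=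
  (valFplus X φ k ω - valFminus X φ k ω) / 2

/-!
Since `X_k = ±1` almost surely, `F` coincides with `F_k^+` or with `F_k^-`, and the claim becomes a
deterministic estimate for `u = F`, `v` the other value and `D = (v - u)/2`. The expression equals
`T/2 + (f''(u) - f''(v)) D²/2`, where `T` is the second-order Taylor remainder of `f` at `u`
evaluated at `v`; Taylor gives `|T| ≤ 4C|D|³` and the mean value theorem gives
`|f''(u) - f''(v)| ≤ 2C|D|`, so the expression is at most `3C|D|³ ≤ (10/3) C |D|³`.
-/

lemma ae_eq_one_or_eq_neg_one_of_map_eq_radLaw {Ω : Type*} [MeasurableSpace Ω] {P : Measure Ω}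
    {Y : Ω → ℝ} (hY : Measurable Y) (hlaw : P.map Y = radLaw) :
    ∀ᵐ ω ∂P, Y ω = 1 ∨ Y ω = -1 := by
  have hs : MeasurableSet ({1, -1} : Set ℝ) := (Set.toFinite _).measurableSet
  rw [ae_iff]
  change P (Y ⁻¹' ({1, -1} : Set ℝ)ᶜ) = 0
  rw [← Measure.map_apply hY hs.compl, hlaw, radLaw]
  simp [Measure.dirac_apply' _ hs.compl]

lemma IsRademacher.ae_eq_one_or_eq_neg_one {Ω : Type*} [MeasurableSpace Ω] {P : Measure Ω}
    {X : ℕ → Ω → ℝ} (hX : IsRademacher P X) (k : ℕ) :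
    ∀ᵐ ω ∂P, X k ω = 1 ∨ X k ω = -1 :=
  ae_eq_one_or_eq_neg_one_of_map_eq_radLaw (hX.meas k) (hX.law k)

section Update

variable {Ω : Type*} (X : ℕ → Ω → ℝ) (φ : (ℕ → ℝ) → ℝ) {k : ℕ} {ω : Ω}

lemma valF_eq_valFplus (h : X k ω = 1) : valF X φ ω = valFplus X φ k ω := by
  rw [valFplus, ← h, Function.update_eq_self]
  rfl

lemma valF_eq_valFminus (h : X k ω = -1) : valF X φ ω = valFminus X φ k ω := by
  rw [valFminus, ← h, Function.update_eq_self]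
  rfl

end Update

section Taylor

variable {f : ℝ → ℝ} {C : ℝ}

lemma abs_taylor_two_remainder_le (hf1 : Differentiable ℝ f) (hf2 : Differentiable ℝ (deriv f))
    (hf3 : Differentiable ℝ (deriv (deriv f))) (hC : ∀ x, |deriv (deriv (deriv f)) x| ≤ C)
    (x y : ℝ) :
    |f y - f x - deriv f x * (y - x) - deriv (deriv f) x * (y - x) ^ 2 / 2|
      ≤ C / 2 * |y - x| ^ 3 := by
  -- `g t` is the remainder of the expansion at `t`; it vanishes at `y`, and its derivative
  -- `-f'''(t) (y - t)² / 2` is bounded by `C (y - x)² / 2` between `x` and `y`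
  let g : ℝ → ℝ := fun t =>
    f y - (f t + deriv f t * (y - t) + deriv (deriv f) t * (y - t) ^ 2 / 2)
  have hg : ∀ t, HasDerivAt g (-(deriv (deriv (deriv f)) t * (y - t) ^ 2 / 2)) t := by
    intro t
    have hy : HasDerivAt (fun s : ℝ => y - s) (-1) t := (hasDerivAt_id t).const_sub y
    have hy2 : HasDerivAt (fun s : ℝ => (y - s) ^ 2) (2 * (y - t) ^ 1 * (-1)) t := hy.pow 2
    refine (((hf1 t).hasDerivAt.add ((hf2 t).hasDerivAt.mul hy)).add
      (((hf3 t).hasDerivAt.mul hy2).div_const 2) |>.const_sub (f y)).congr_deriv ?_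
    ring
  have hbound : ∀ t ∈ Set.uIcc x y,
      ‖-(deriv (deriv (deriv f)) t * (y - t) ^ 2 / 2)‖ ≤ C / 2 * |y - x| ^ 2 := by
    intro t ht
    have hyt : |y - t| ≤ |y - x| := Set.abs_sub_right_of_mem_uIcc ht
    rw [Real.norm_eq_abs, abs_neg, abs_div, abs_mul, abs_two, abs_pow, mul_div_right_comm]
    have hC0 : 0 ≤ C := (abs_nonneg _).trans (hC 0)
    gcongr
    exact hC t
  have key := (convex_uIcc x y).norm_image_sub_le_of_norm_hasDerivWithin_le
    (fun t _ => (hg t).hasDerivWithinAt) hbound Set.left_mem_uIcc Set.right_mem_uIcc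
  have hgx : g y - g x =
      -(f y - f x - deriv f x * (y - x) - deriv (deriv f) x * (y - x) ^ 2 / 2) := by
    simp only [g]; ring
  rw [hgx, norm_neg, Real.norm_eq_abs, Real.norm_eq_abs] at key
  calc _ ≤ C / 2 * |y - x| ^ 2 * |y - x| := key
    _ = C / 2 * |y - x| ^ 3 := by ring

lemma abs_chain_remainder_le (hf1 : Differentiable ℝ f) (hf2 : Differentiable ℝ (deriv f))
    (hf3 : Differentiable ℝ (deriv (deriv f))) (hC : ∀ x, |deriv (deriv (deriv f)) x| ≤ C)
    (u v : ℝ) :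
    |(f v - f u) / 2 - deriv f u * ((v - u) / 2)
        - (1 / 2) * (deriv (deriv f) u + deriv (deriv f) v) * ((v - u) / 2) ^ 2|
      ≤ 3 * C * |(v - u) / 2| ^ 3 := by
  set D := (v - u) / 2
  have hvu : v - u = 2 * D := by ring
  have hT := abs_taylor_two_remainder_le hf1 hf2 hf3 hC u v
  have hB : |deriv (deriv f) u - deriv (deriv f) v| ≤ C * |u - v| := by
    simpa only [Real.norm_eq_abs] using Convex.norm_image_sub_le_of_norm_deriv_le
      (fun t _ => hf3 t) (fun t _ => hC t) convex_univ (Set.mem_univ v) (Set.mem_univ u)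
  rw [hvu, abs_mul, abs_two] at hT
  rw [show u - v = -2 * D by ring, abs_mul, abs_neg, abs_two] at hB
  calc _ = |(f v - f u - deriv f u * (2 * D) - deriv (deriv f) u * (2 * D) ^ 2 / 2) / 2
          + (deriv (deriv f) u - deriv (deriv f) v) / 2 * D ^ 2| := by
        congr 1; ring
    _ ≤ C / 2 * (2 * |D|) ^ 3 / 2 + C * (2 * |D|) / 2 * |D| ^ 2 := by
        refine (abs_add_le _ _).trans ?_
        rw [abs_div, abs_mul, abs_div, abs_two, abs_pow]
        gcongr
    _ = 3 * C * |D| ^ 3 := by ring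

lemma abs_chain_remainder_le_of_sign (hf1 : Differentiable ℝ f)
    (hf2 : Differentiable ℝ (deriv f)) (hf3 : Differentiable ℝ (deriv (deriv f)))
    (hC : ∀ x, |deriv (deriv (deriv f)) x| ≤ C) {a b s c : ℝ}
    (hs : s = 1 ∧ c = a ∨ s = -1 ∧ c = b) :
    |(f a - f b) / 2 - deriv f c * ((a - b) / 2)
        + (1 / 2) * (deriv (deriv f) a + deriv (deriv f) b) * ((a - b) / 2) ^ 2 * s|
      ≤ 3 * C * |(a - b) / 2| ^ 3 := by
  rcases hs with ⟨rfl, rfl⟩ | ⟨rfl, rfl⟩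
  · convert abs_chain_remainder_le hf1 hf2 hf3 hC c b using 1
    · rw [← abs_neg]; congr 1; ring
    · rw [← abs_neg ((b - c) / 2), ← neg_div, neg_sub]
  · convert abs_chain_remainder_le hf1 hf2 hf3 hC c a using 2
    ring

end Taylor

theorem stmt6_general {Ω : Type*} [MeasurableSpace Ω] (P : Measure Ω)
    (X : ℕ → Ω → ℝ) (hX : IsRademacher P X)
    (φ : (ℕ → ℝ) → ℝ)
    (f : ℝ → ℝ) (hf1 : Differentiable ℝ f) (hf2 : Differentiable ℝ (deriv f))
    (hf3 : Differentiable ℝ (deriv (deriv f)))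
    (C : ℝ) (hC : ∀ x, |deriv (deriv (deriv f)) x| ≤ C) (k : ℕ) :
    ∀ᵐ ω ∂P,
      |(f (valFplus X φ k ω) - f (valFminus X φ k ω)) / 2
          - deriv f (valF X φ ω) * gradD X φ k ω
          + (1 / 2) * (deriv (deriv f) (valFplus X φ k ω)
              + deriv (deriv f) (valFminus X φ k ω)) * (gradD X φ k ω) ^ 2 * X k ω|
        ≤ (10 / 3) * C * |gradD X φ k ω| ^ 3 := by
  have hC0 : 0 ≤ C := (abs_nonneg _).trans (hC 0)
  filter_upwards [hX.ae_eq_one_or_eq_neg_one k] with ω hω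
  have hsign : X k ω = 1 ∧ valF X φ ω = valFplus X φ k ω
      ∨ X k ω = -1 ∧ valF X φ ω = valFminus X φ k ω :=
    hω.imp (fun h => ⟨h, valF_eq_valFplus X φ h⟩) (fun h => ⟨h, valF_eq_valFminus X φ h⟩)
  have h := abs_chain_remainder_le_of_sign hf1 hf2 hf3 hC hsign
  exact h.trans (by rw [gradD]; gcongr; norm_num)

/-- **Chain rule.** For a σ(X)-measurable `F = φ(X)` and `f : ℝ → ℝ`
thrice differentiable with third derivative bounded by `C`, almost surely
`|D_k f(F) - f'(F) D_k F + ½ (f''(F_k^+) + f''(F_k^-)) (D_k F)² X_k|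
  ≤ (10/3) C |D_k F|³`. -/
theorem stmt6 {Ω : Type*} [MeasurableSpace Ω] (P : Measure Ω)
    [IsProbabilityMeasure P] (X : ℕ → Ω → ℝ) (hX : IsRademacher P X)
    (φ : (ℕ → ℝ) → ℝ) (hφ : Measurable φ)
    (f : ℝ → ℝ) (hf1 : Differentiable ℝ f) (hf2 : Differentiable ℝ (deriv f))
    (hf3 : Differentiable ℝ (deriv (deriv f)))
    (C : ℝ) (hC : ∀ x, |deriv (deriv (deriv f)) x| ≤ C) (k : ℕ) :
    ∀ᵐ ω ∂P,
      |(f (valFplus X φ k ω) - f (valFminus X φ k ω)) / 2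
          - deriv f (valF X φ ω) * gradD X φ k ω
          + (1 / 2) * (deriv (deriv f) (valFplus X φ k ω)
              + deriv (deriv f) (valFminus X φ k ω)) * (gradD X φ k ω) ^ 2 * X k ω|
        ≤ (10 / 3) * C * |gradD X φ k ω| ^ 3 :=
  stmt6_general P X hX φ f hf1 hf2 hf3 C hC k
end
end

section
/- Let Z be a standard Gaussian random variable and let F be an integrable centered random variable. Suppose there exist constants B₁, B₂ ≥ 0 such that for every h ∈ C_b², |E[h(F)] − E[h(Z)]| ≤ min(4‖h‖_∞, ‖h″‖_∞) · B₁ + ‖h″‖_∞ · B₂, and that 4(B₁ + B₂) ≤ 5. Then the Wasserstein distance satisfies d_W(F, Z) ≤ √( 2(B₁ + B₂)(5 + E|F|) ). -/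
/-!
Truncate a 1-Lipschitz test function `g` at height `R` and mollify the truncation with the
triweight kernel `35/(32ε) · (1 - (y/ε)²)₊³`. The result `h` is a bounded `C²` function with
`|h''| ≤ 35/(16ε)` and `|h - g| ≤ 35ε/128` up to the truncation error `(|g| - R)₊`, whose
integrals vanish as `R → ∞`. Applying the hypothesis with a sup-norm bound so large that the
minimum is `|h''|` gives `|E g(F) - E g(Z)| ≤ 35ε/64 + 35(B₁ + B₂)/(16ε)`, and `ε = √(B₁ + B₂)`
turns this into `(175/64)√(B₁ + B₂) ≤ √(10(B₁ + B₂))`.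
-/

open MeasureTheory ProbabilityTheory Filter Set Topology
open scoped ENNReal NNReal

noncomputable section

theorem hasDerivAt_max_zero_pow {n : ℕ} (hn : 1 ≤ n) (x : ℝ) :
    HasDerivAt (fun x : ℝ => max x 0 ^ (n + 1)) ((n + 1) * max x 0 ^ n) x := by
  have off_zero (y : ℝ) (hy : y ≠ 0) :
      HasDerivAt (fun x : ℝ => max x 0 ^ (n + 1)) ((n + 1) * max y 0 ^ n) y := by
    rcases hy.lt_or_gt with hy | hy
    · rw [max_eq_right hy.le, zero_pow (by omega), mul_zero]
      refine (hasDerivAt_const y (0 : ℝ)).congr_of_eventuallyEq ?_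
      filter_upwards [eventually_lt_nhds hy] with z hz
      rw [max_eq_right hz.le, zero_pow (by omega)]
    · rw [max_eq_left hy.le]
      refine ((hasDerivAt_pow (n + 1) y).congr_deriv (by push_cast; ring)).congr_of_eventuallyEq ?_
      filter_upwards [eventually_gt_nhds hy] with z hz
      rw [max_eq_left hz.le]
  rcases eq_or_ne x 0 with rfl | hx
  · exact hasDerivAt_of_hasDerivAt_of_ne off_zero (by fun_prop) (by fun_prop)
  · exact off_zero x hx

theorem contDiff_max_zero_pow (n : ℕ) : ContDiff ℝ n (fun x : ℝ => max x 0 ^ (n + 1)) := by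
  induction n with
  | zero => simpa using continuous_id.max continuous_const
  | succ n ih =>
    have hd := hasDerivAt_max_zero_pow (n := n + 1) (by omega)
    rw [Nat.cast_succ, contDiff_succ_iff_deriv]
    refine ⟨fun x => (hd x).differentiableAt, by simp, ?_⟩
    rw [funext fun x => (hd x).deriv]
    exact contDiff_const.mul ih

theorem hasDerivAt_max_one_sub_div_sq_pow {n : ℕ} (hn : 1 ≤ n) (ε y : ℝ) :
    HasDerivAt (fun y => max (1 - (y / ε) ^ 2) 0 ^ (n + 1))
      ((n + 1) * max (1 - (y / ε) ^ 2) 0 ^ n * (-(2 * y / ε ^ 2))) y := by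
  have hinner : HasDerivAt (fun y => 1 - (y / ε) ^ 2) (-(2 * y / ε ^ 2)) y := by
    refine ((((hasDerivAt_id' y).div_const ε).pow 2).const_sub 1).congr_deriv ?_
    ring
  exact (hasDerivAt_max_zero_pow hn _).comp y hinner

theorem max_one_sub_div_sq_eq_zero {ε y : ℝ} (hε : 0 < ε) (hy : ε ≤ |y|) :
    max (1 - (y / ε) ^ 2) 0 = 0 := by
  refine max_eq_right (sub_nonpos.2 ?_)
  rw [div_pow, one_le_div (by positivity)]
  calc ε ^ 2 ≤ |y| ^ 2 := by gcongr
    _ = y ^ 2 := sq_abs y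

theorem support_subset_Ioc_of_eq_zero {f : ℝ → ℝ} {a : ℝ} (hf : ∀ y, a ≤ |y| → f y = 0) :
    Function.support f ⊆ Ioc (-a) a := by
  intro y hy
  by_contra h
  rw [mem_Ioc, not_and_or, not_lt, not_le] at h
  refine hy (hf y ?_)
  rcases h with h | h
  · linarith [neg_le_abs y]
  · exact h.le.trans (le_abs_self y)

theorem hasCompactSupport_of_eq_zero {f : ℝ → ℝ} {a : ℝ} (hf : ∀ y, a ≤ |y| → f y = 0) :
    HasCompactSupport f :=
  HasCompactSupport.intro isCompact_Icc fun _ hy =>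
    Function.notMem_support.1 fun h => hy (Ioc_subset_Icc_self (support_subset_Ioc_of_eq_zero hf h))

theorem integral_abs_eq_two_mul_of_hasDerivAt {φ φ' : ℝ → ℝ} {a : ℝ} (ha : 0 ≤ a)
    (hφ : ∀ y, HasDerivAt φ (φ' y) y) (hφ' : Continuous φ')
    (hmono : ∀ y ≤ 0, 0 ≤ φ' y) (hanti : ∀ y, 0 ≤ y → φ' y ≤ 0)
    (hφa : φ (-a) = 0) (hφa' : φ a = 0) (hsupp : ∀ y, a ≤ |y| → φ' y = 0) :
    ∫ y, |φ' y| = 2 * φ 0 := by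
  have hint (b c : ℝ) : IntervalIntegrable φ' volume b c := hφ'.intervalIntegrable b c
  have left : ∫ y in -a..0, |φ' y| = φ 0 := by
    rw [intervalIntegral.integral_congr fun y hy => abs_of_nonneg (hmono y ?_),
      intervalIntegral.integral_eq_sub_of_hasDerivAt (fun y _ => hφ y) (hint _ _), hφa, sub_zero]
    rw [uIcc_of_le (by linarith)] at hy
    exact hy.2
  have right : ∫ y in 0..a, |φ' y| = φ 0 := by
    rw [intervalIntegral.integral_congr fun y hy => abs_of_nonpos (hanti y ?_),
      intervalIntegral.integral_neg,
      intervalIntegral.integral_eq_sub_of_hasDerivAt (fun y _ => hφ y) (hint _ _), hφa', zero_sub,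
      neg_neg]
    rw [uIcc_of_le ha] at hy
    exact hy.1
  rw [← intervalIntegral.integral_eq_integral_of_support_subset
      (support_subset_Ioc_of_eq_zero fun y hy => by rw [hsupp y hy, abs_zero]),
    ← intervalIntegral.integral_add_adjacent_intervals (b := 0) (hint _ _).abs (hint _ _).abs,
    left, right]
  ring

def triweight (ε y : ℝ) : ℝ := 35 / (32 * ε) * max (1 - (y / ε) ^ 2) 0 ^ 3

section Triweight

variable {ε : ℝ}

theorem triweight_nonneg (hε : 0 ≤ ε) (y : ℝ) : 0 ≤ triweight ε y := by
  unfold triweight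
  positivity

theorem triweight_eq_zero (hε : 0 < ε) {y : ℝ} (hy : ε ≤ |y|) : triweight ε y = 0 := by
  rw [triweight, max_one_sub_div_sq_eq_zero hε hy]
  ring

theorem hasCompactSupport_triweight (hε : 0 < ε) : HasCompactSupport (triweight ε) :=
  hasCompactSupport_of_eq_zero fun _ => triweight_eq_zero hε

theorem contDiff_triweight (ε : ℝ) : ContDiff ℝ 2 (triweight ε) :=
  contDiff_const.mul
    ((contDiff_max_zero_pow 2).comp (contDiff_const.sub ((contDiff_id.div_const ε).pow 2)))

theorem hasDerivAt_triweight (ε y : ℝ) :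
    HasDerivAt (triweight ε) (-(105 / (16 * ε ^ 3)) * y * max (1 - (y / ε) ^ 2) 0 ^ 2) y :=
  ((hasDerivAt_max_one_sub_div_sq_pow (n := 2) (by norm_num) ε y).const_mul _).congr_deriv
    (by push_cast; ring)

theorem integral_triweight (hε : 0 < ε) : ∫ y, triweight ε y = 1 := by
  have hsupp : Function.support (fun u : ℝ => max (1 - u ^ 2) 0 ^ 3) ⊆ Ioc (-1) 1 :=
    support_subset_Ioc_of_eq_zero fun u hu => by
      have := max_one_sub_div_sq_eq_zero one_pos hu
      rw [div_one] at this
      rw [this, zero_pow three_ne_zero]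
  have hpoly : EqOn (fun u : ℝ => max (1 - u ^ 2) 0 ^ 3)
      (fun u => 1 - 3 * u ^ 2 + 3 * u ^ 4 - u ^ 6) (uIcc (-1) 1) := fun u hu => by
    rw [uIcc_of_le (by norm_num), mem_Icc] at hu
    simp only
    rw [max_eq_left (by nlinarith)]
    ring
  have hunit : ∫ u : ℝ, max (1 - u ^ 2) 0 ^ 3 = 32 / 35 := by
    rw [← intervalIntegral.integral_eq_integral_of_support_subset hsupp,
      intervalIntegral.integral_congr hpoly, intervalIntegral.integral_sub,
      intervalIntegral.integral_add, intervalIntegral.integral_sub]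
    all_goals first
      | exact (by fun_prop : Continuous _).intervalIntegrable _ _
      | norm_num [integral_pow]
  show ∫ y, 35 / (32 * ε) * max (1 - (y / ε) ^ 2) 0 ^ 3 = 1
  rw [integral_const_mul, Measure.integral_comp_div (fun u => max (1 - u ^ 2) 0 ^ 3) ε, hunit,
    abs_of_pos hε, smul_eq_mul]
  field_simp

theorem integral_abs_mul_triweight (hε : 0 < ε) :
    ∫ y, |y| * triweight ε y = 35 * ε / 128 := by
  have hφ (y : ℝ) : HasDerivAt (fun y => 35 * ε / 256 * max (1 - (y / ε) ^ 2) 0 ^ 4)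
      (-(y * triweight ε y)) y :=
    ((hasDerivAt_max_one_sub_div_sq_pow (n := 3) (by norm_num) ε y).const_mul _).congr_deriv
      (by rw [triweight]; field_simp; ring)
  calc ∫ y, |y| * triweight ε y = ∫ y, |-(y * triweight ε y)| := by
        simp only [abs_neg, abs_mul, abs_of_nonneg (triweight_nonneg hε.le _)]
    _ = 2 * (35 * ε / 256 * max (1 - (0 / ε) ^ 2) 0 ^ 4) :=
        integral_abs_eq_two_mul_of_hasDerivAt hε.le hφ
          (continuous_id.mul (contDiff_triweight ε).continuous).neg
          (fun y hy => neg_nonneg.2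
            (mul_nonpos_of_nonpos_of_nonneg hy (triweight_nonneg hε.le y)))
          (fun y hy => neg_nonpos.2 (mul_nonneg hy (triweight_nonneg hε.le y)))
          (by simp [hε.ne']) (by simp [hε.ne'])
          (fun y hy => by rw [triweight_eq_zero hε hy, mul_zero, neg_zero])
    _ = 35 * ε / 128 := by norm_num; ring

theorem integral_abs_deriv_triweight (hε : 0 < ε) :
    ∫ y, |deriv (triweight ε) y| = 35 / (16 * ε) := by
  have hc : 0 ≤ 105 / (16 * ε ^ 3) := by positivity
  rw [funext fun y => (hasDerivAt_triweight ε y).deriv,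
    integral_abs_eq_two_mul_of_hasDerivAt hε.le (hasDerivAt_triweight ε) (by fun_prop)
      (fun y hy => mul_nonneg (mul_nonneg_of_nonpos_of_nonpos (neg_nonpos.2 hc) hy)
        (sq_nonneg _))
      (fun y hy => mul_nonpos_of_nonpos_of_nonneg
        (mul_nonpos_of_nonpos_of_nonneg (neg_nonpos.2 hc) hy) (sq_nonneg _))
      (by simp [triweight, hε.ne']) (by simp [triweight, hε.ne'])
      (fun y hy => by rw [max_one_sub_div_sq_eq_zero hε hy]; ring)]
  simp [triweight]
  ring

end Triweight

section Convolution

open ContinuousLinearMap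

variable {f ψ : ℝ → ℝ} {K : ℝ≥0}

theorem abs_convolution_le {R : ℝ} (hf : ∀ x, |f x| ≤ R) (hψ : Integrable ψ) (x : ℝ) :
    |convolution f ψ (mul ℝ ℝ) volume x| ≤ R * ∫ y, |ψ y| := by
  rw [convolution_mul_swap (𝕜 := ℝ), ← integral_const_mul (μ := volume) R]
  refine norm_integral_le_of_norm_le (G := ℝ) (hψ.abs.const_mul R) (ae_of_all _ fun y => ?_)
  rw [Real.norm_eq_abs, abs_mul]
  exact mul_le_mul_of_nonneg_right (hf _) (abs_nonneg _)

theorem abs_convolution_sub_convolution_le (hf : LipschitzWith K f) (hψ : Continuous ψ)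
    (hψs : HasCompactSupport ψ) (x z : ℝ) :
    |convolution f ψ (mul ℝ ℝ) volume x - convolution f ψ (mul ℝ ℝ) volume z| ≤
      K * (∫ y, |ψ y|) * |x - z| := by
  have hint (x : ℝ) : Integrable (fun t => f (x - t) * ψ t) :=
    ((hf.continuous.comp (continuous_sub_left x)).mul hψ).integrable_of_hasCompactSupport
      (μ := volume) hψs.mul_left
  rw [convolution_mul_swap (𝕜 := ℝ), convolution_mul_swap (𝕜 := ℝ),
    ← integral_sub (hint x) (hint z), mul_right_comm, ← integral_const_mul]
  refine norm_integral_le_of_norm_le (G := ℝ)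
    ((hψ.abs.integrable_of_hasCompactSupport (μ := volume) hψs.abs).const_mul _)
    (ae_of_all _ fun t => ?_)
  have hlip := hf.dist_le_mul (x - t) (z - t)
  rw [Real.dist_eq, Real.dist_eq, sub_sub_sub_cancel_right] at hlip
  rw [Real.norm_eq_abs, ← sub_mul, abs_mul]
  exact mul_le_mul_of_nonneg_right hlip (abs_nonneg _)

theorem abs_deriv_convolution_le (hf : LipschitzWith K f) (hψ : Continuous ψ)
    (hψs : HasCompactSupport ψ) (x : ℝ) :
    |deriv (convolution f ψ (mul ℝ ℝ) volume) x| ≤ K * ∫ y, |ψ y| := by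
  simpa only [Real.norm_eq_abs] using norm_deriv_le_of_lip'
    (f := convolution f ψ (mul ℝ ℝ) volume) (C := K * ∫ y, |ψ y|)
    (mul_nonneg K.2 (integral_nonneg fun _ => abs_nonneg (ψ _)))
    (Eventually.of_forall fun z => by
      simpa only [Real.norm_eq_abs] using abs_convolution_sub_convolution_le hf hψ hψs z x)

theorem abs_convolution_sub_self_le (hf : LipschitzWith K f) (hψ : Continuous ψ)
    (hψs : HasCompactSupport ψ) (hψ0 : ∀ y, 0 ≤ ψ y) (hψ1 : ∫ y, ψ y = 1) (x : ℝ) :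
    |convolution f ψ (mul ℝ ℝ) volume x - f x| ≤ K * ∫ y, |y| * ψ y := by
  have hint : Integrable (fun t => f (x - t) * ψ t) :=
    ((hf.continuous.comp (continuous_sub_left x)).mul hψ).integrable_of_hasCompactSupport
      (μ := volume) hψs.mul_left
  have hψi : Integrable ψ := hψ.integrable_of_hasCompactSupport (μ := volume) hψs
  conv_lhs => rw [convolution_mul_swap (𝕜 := ℝ), ← mul_one (f x), ← hψ1, ← integral_const_mul,
    ← integral_sub hint (hψi.const_mul _)]
  rw [← integral_const_mul]
  refine norm_integral_le_of_norm_le (G := ℝ)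
    (((continuous_abs.mul hψ).integrable_of_hasCompactSupport (μ := volume)
      hψs.mul_left).const_mul _)
    (ae_of_all _ fun t => ?_)
  have hlip := hf.dist_le_mul (x - t) x
  rw [Real.dist_eq, Real.dist_eq, sub_sub_cancel_left, abs_neg] at hlip
  rw [Real.norm_eq_abs, ← sub_mul, abs_mul, abs_of_nonneg (hψ0 t), ← mul_assoc]
  exact mul_le_mul_of_nonneg_right hlip (hψ0 t)

theorem exists_contDiff_two_approx (hf : LipschitzWith K f) {R : ℝ} (hR : ∀ x, |f x| ≤ R)
    {ε : ℝ} (hε : 0 < ε) :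
    ∃ h : ℝ → ℝ, ContDiff ℝ 2 h ∧ (∀ x, |h x| ≤ R) ∧ (∃ C, ∀ x, |deriv h x| ≤ C) ∧
      (∀ x, |deriv (deriv h) x| ≤ K * (35 / (16 * ε))) ∧
      ∀ x, |h x - f x| ≤ K * (35 * ε / 128) := by
  have hφ := contDiff_triweight ε
  have hφs := hasCompactSupport_triweight hε
  have hφ1 := integral_triweight hε
  have hφabs : ∫ y, |triweight ε y| = 1 := by
    simpa only [abs_of_nonneg (triweight_nonneg hε.le _)] using hφ1
  have hderiv : deriv (convolution f (triweight ε) (mul ℝ ℝ) volume) =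
      convolution f (deriv (triweight ε)) (mul ℝ ℝ) volume :=
    funext fun x => (hφs.hasDerivAt_convolution_right _ hf.continuous.locallyIntegrable
      (hφ.of_le one_le_two) x).deriv
  refine ⟨convolution f (triweight ε) (mul ℝ ℝ) volume, ?_, fun x => ?_, ⟨K * 1, fun x => ?_⟩,
    fun x => ?_, fun x => ?_⟩
  · exact_mod_cast hφs.contDiff_convolution_right _ hf.continuous.locallyIntegrable
      (n := 2) (by exact_mod_cast hφ)
  · simpa [hφabs] using
      abs_convolution_le hR (hφ.continuous.integrable_of_hasCompactSupport hφs) x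
  · simpa [hφabs] using abs_deriv_convolution_le hf hφ.continuous hφs x
  · rw [hderiv, ← integral_abs_deriv_triweight hε]
    exact abs_deriv_convolution_le hf (hφ.continuous_deriv one_le_two) hφs.deriv x
  · rw [← integral_abs_mul_triweight hε]
    exact abs_convolution_sub_self_le hf hφ.continuous hφs (triweight_nonneg hε.le) hφ1 x

end Convolution

theorem abs_sub_clamp_le (R a : ℝ) : |a - max (-R) (min R a)| ≤ max (|a| - R) 0 := by
  grind

theorem abs_clamp_le {R : ℝ} (hR : 0 ≤ R) (a : ℝ) : |max (-R) (min R a)| ≤ R :=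
  abs_le.2 ⟨le_max_left _ _, max_le (by linarith) (min_le_left _ _)⟩

theorem LipschitzWith.integrable_of_integrable_id {μ : Measure ℝ} [IsFiniteMeasure μ]
    {g : ℝ → ℝ} {K : ℝ≥0} (hg : LipschitzWith K g) (hμ : Integrable (fun x => x) μ) :
    Integrable g μ := by
  refine ((integrable_const |g 0|).add (hμ.abs.const_mul K)).mono'
    hg.continuous.aestronglyMeasurable (ae_of_all _ fun x => ?_)
  have := hg.dist_le_mul x 0
  rw [Real.dist_eq, Real.dist_eq, sub_zero] at this
  show |g x| ≤ |g 0| + K * |x|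
  linarith [abs_sub_abs_le_abs_sub (g x) (g 0)]

theorem tendsto_integral_max_abs_sub_atTop {α : Type*} [MeasurableSpace α] {μ : Measure α}
    {u : α → ℝ} (hu : Integrable u μ) :
    Tendsto (fun R : ℝ => ∫ x, max (|u x| - R) 0 ∂μ) atTop (𝓝 0) := by
  have hlim := tendsto_integral_filter_of_dominated_convergence (l := atTop)
    (F := fun (R : ℝ) x => max (|u x| - R) 0) (f := fun _ => 0) (fun x => |u x|)
    (Eventually.of_forall fun R =>
      ((continuous_abs.sub continuous_const).max continuous_const).comp_aestronglyMeasurable hu.1)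
    ((eventually_ge_atTop 0).mono fun R hR => ae_of_all _ fun x => by
      rw [Real.norm_eq_abs, abs_of_nonneg (le_max_right _ _)]
      exact max_le (by linarith) (abs_nonneg _))
    hu.abs
    (ae_of_all _ fun x => tendsto_const_nhds.congr' ((eventually_ge_atTop |u x|).mono
      fun R hR => (max_eq_right (by linarith)).symm))
  simpa using hlim

theorem abs_integral_sub_le_of_abs_sub_le {α : Type*} [MeasurableSpace α] {μ : Measure α}
    {f₁ f₂ b : α → ℝ} (h₁ : Integrable f₁ μ) (h₂ : Integrable f₂ μ) (hb : Integrable b μ)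
    (h : ∀ x, |f₁ x - f₂ x| ≤ b x) : |∫ x, f₁ x ∂μ - ∫ x, f₂ x ∂μ| ≤ ∫ x, b x ∂μ := by
  rw [← integral_sub h₁ h₂]
  exact norm_integral_le_of_norm_le (G := ℝ) hb (ae_of_all _ h)

def SmoothTestBound (μ ν : Measure ℝ) (Δ : ℝ) : Prop :=
  ∀ (h : ℝ → ℝ) (M : ℝ), ContDiff ℝ 2 h → (∃ C, ∀ x, |h x| ≤ C) →
    (∃ C, ∀ x, |deriv h x| ≤ C) → (∀ x, |deriv (deriv h) x| ≤ M) →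
    |∫ x, h x ∂μ - ∫ x, h x ∂ν| ≤ M * Δ

section SmoothTestBound

variable {μ ν : Measure ℝ} [IsProbabilityMeasure μ] [IsProbabilityMeasure ν] {Δ : ℝ}
  {g : ℝ → ℝ} {K : ℝ≥0} {ε : ℝ}

theorem SmoothTestBound.abs_integral_sub_le_add_tails (H : SmoothTestBound μ ν Δ)
    (hg : LipschitzWith K g) (hgμ : Integrable g μ) (hgν : Integrable g ν) (hε : 0 < ε)
    {R : ℝ} (hR : 0 ≤ R) :
    |∫ x, g x ∂μ - ∫ x, g x ∂ν| ≤ K * (35 * ε / 64 + 35 / (16 * ε) * Δ) +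
      (∫ x, max (|g x| - R) 0 ∂μ + ∫ x, max (|g x| - R) 0 ∂ν) := by
  obtain ⟨h, hC2, hbd, hd1, hd2, happrox⟩ := exists_contDiff_two_approx
    ((hg.const_min R).const_max (-R)) (fun x => abs_clamp_le hR (g x)) hε
  have hclose (x : ℝ) : |g x - h x| ≤ max (|g x| - R) 0 + K * (35 * ε / 128) :=
    (abs_sub_le _ _ _).trans
      (add_le_add (abs_sub_clamp_le R (g x)) ((abs_sub_comm _ _).trans_le (happrox x)))
  have hintegral_close (ρ : Measure ℝ) [IsProbabilityMeasure ρ] (hgρ : Integrable g ρ) :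
      |∫ x, g x ∂ρ - ∫ x, h x ∂ρ| ≤ ∫ x, max (|g x| - R) 0 ∂ρ + K * (35 * ε / 128) := by
    have htail : Integrable (fun x => max (|g x| - R) 0) ρ :=
      (hgρ.abs.sub (integrable_const R)).sup (integrable_const 0)
    calc |∫ x, g x ∂ρ - ∫ x, h x ∂ρ| ≤ ∫ x, (max (|g x| - R) 0 + K * (35 * ε / 128)) ∂ρ :=
          abs_integral_sub_le_of_abs_sub_le hgρ
            (.of_bound hC2.continuous.aestronglyMeasurable R (ae_of_all _ hbd))
            (htail.add (integrable_const _)) hclose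
      _ = ∫ x, max (|g x| - R) 0 ∂ρ + K * (35 * ε / 128) := by
          rw [integral_add htail (integrable_const _), integral_const]
          simp
  calc |∫ x, g x ∂μ - ∫ x, g x ∂ν|
      ≤ |∫ x, g x ∂μ - ∫ x, h x ∂μ| + |∫ x, h x ∂μ - ∫ x, h x ∂ν| +
          |∫ x, h x ∂ν - ∫ x, g x ∂ν| :=
        (abs_sub_le _ (∫ x, h x ∂ν) _).trans (add_le_add_left (abs_sub_le _ _ _) _)
    _ ≤ (∫ x, max (|g x| - R) 0 ∂μ + K * (35 * ε / 128)) + K * (35 / (16 * ε)) * Δ +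
          (∫ x, max (|g x| - R) 0 ∂ν + K * (35 * ε / 128)) := by
        gcongr
        · exact hintegral_close μ hgμ
        · exact H h _ hC2 ⟨R, hbd⟩ hd1 hd2
        · rw [abs_sub_comm]
          exact hintegral_close ν hgν
    _ = _ := by ring

theorem SmoothTestBound.abs_integral_sub_le (H : SmoothTestBound μ ν Δ)
    (hg : LipschitzWith K g) (hgμ : Integrable g μ) (hgν : Integrable g ν) (hε : 0 < ε) :
    |∫ x, g x ∂μ - ∫ x, g x ∂ν| ≤ K * (35 * ε / 64 + 35 / (16 * ε) * Δ) := by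
  have htails := ((tendsto_integral_max_abs_sub_atTop hgμ).add
    (tendsto_integral_max_abs_sub_atTop hgν)).const_add (K * (35 * ε / 64 + 35 / (16 * ε) * Δ))
  rw [add_zero, add_zero] at htails
  exact ge_of_tendsto htails ((eventually_ge_atTop 0).mono fun R hR =>
    H.abs_integral_sub_le_add_tails hg hgμ hgν hε hR)

end SmoothTestBound

theorem le_sqrt_of_forall_le_add_div {a Δ : ℝ} (hΔ : 0 ≤ Δ)
    (h : ∀ ε > 0, a ≤ 35 * ε / 64 + 35 / (16 * ε) * Δ) : a ≤ √(10 * Δ) := by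
  rcases hΔ.eq_or_lt with rfl | hΔ
  · rw [mul_zero, Real.sqrt_zero]
    by_contra! ha
    linarith [h a ha]
  · have hs := Real.sqrt_pos.2 hΔ
    calc a ≤ 35 * √Δ / 64 + 35 / (16 * √Δ) * Δ := h _ hs
      _ = 175 / 64 * √Δ := by
          field_simp
          rw [Real.sq_sqrt hΔ.le]
          ring
      _ ≤ √(10 * Δ) := by
          rw [Real.le_sqrt (by positivity) (by positivity), mul_pow, Real.sq_sqrt hΔ.le]
          nlinarith

theorem stmt9_general {Ω : Type*} [MeasurableSpace Ω] (P : Measure Ω)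
    [IsProbabilityMeasure P]
    (F : Ω → ℝ) (hFi : Integrable F P)
    (B1 B2 : ℝ)
    (hmain : ∀ (h : ℝ → ℝ) (M0 M2 : ℝ), ContDiff ℝ 2 h → (∀ x, |h x| ≤ M0) →
      (∃ C, ∀ x, |deriv h x| ≤ C) → (∀ x, |deriv (deriv h) x| ≤ M2) →
      |∫ ω, h (F ω) ∂P - ∫ x, h x ∂(gaussianReal 0 1)| ≤
        min (4 * M0) M2 * B1 + M2 * B2) :
    ∀ g : ℝ → ℝ, LipschitzWith 1 g →
      |∫ ω, g (F ω) ∂P - ∫ x, g x ∂(gaussianReal 0 1)| ≤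
        Real.sqrt (2 * (B1 + B2) * (5 + ∫ ω, |F ω| ∂P)) := by
  intro g hg
  have hF := hFi.aemeasurable
  have := Measure.isProbabilityMeasure_map hF
  have hΔ : 0 ≤ B1 + B2 := by
    simpa using hmain 0 1 1 contDiff_const (by simp) ⟨0, by simp⟩ (by simp)
  have H : SmoothTestBound (P.map F) (gaussianReal 0 1) (B1 + B2) := by
    rintro h M hh ⟨M0, h0⟩ h1 h2
    rw [integral_map hF hh.continuous.aestronglyMeasurable]
    calc _ ≤ min (4 * max M0 (M / 4)) M * B1 + M * B2 :=
          hmain h _ M hh (fun x => (h0 x).trans (le_max_left _ _)) h1 h2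
      _ = M * (B1 + B2) := by
          rw [min_eq_right (by linarith [le_max_right M0 (M / 4)])]
          ring
  have hgμ : Integrable g (P.map F) := hg.integrable_of_integrable_id
    ((integrable_map_measure aestronglyMeasurable_id hF).2 hFi)
  have hgγ : Integrable g (gaussianReal 0 1) := hg.integrable_of_integrable_id
    ((memLp_id_gaussianReal 1).integrable le_rfl)
  have hm : 0 ≤ ∫ ω, |F ω| ∂P := integral_nonneg fun ω => abs_nonneg (F ω)
  rw [← integral_map hF hg.continuous.aestronglyMeasurable]
  calc _ ≤ √(10 * (B1 + B2)) := le_sqrt_of_forall_le_add_div hΔ fun ε hε => by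
          simpa using H.abs_integral_sub_le hg hgμ hgγ hε
    _ ≤ _ := Real.sqrt_le_sqrt (by nlinarith)

/-- From bounds over twice differentiable test functions to the
Wasserstein distance: if `|E[h(F)] - E[h(Z)]| ≤ min(4‖h‖_∞, ‖h''‖_∞) B₁ + ‖h''‖_∞ B₂`
for every `h ∈ C_b²` and `4(B₁ + B₂) ≤ 5`, then
`d_W(F, Z) ≤ √(2 (B₁ + B₂) (5 + E|F|))`. -/
theorem stmt9 {Ω : Type*} [MeasurableSpace Ω] (P : Measure Ω)
    [IsProbabilityMeasure P]
    (F : Ω → ℝ) (hFi : Integrable F P) (hFc : ∫ ω, F ω ∂P = 0)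
    (B1 B2 : ℝ) (hB1 : 0 ≤ B1) (hB2 : 0 ≤ B2)
    (hmain : ∀ (h : ℝ → ℝ) (M0 M2 : ℝ), ContDiff ℝ 2 h → (∀ x, |h x| ≤ M0) →
      (∃ C, ∀ x, |deriv h x| ≤ C) → (∀ x, |deriv (deriv h) x| ≤ M2) →
      |∫ ω, h (F ω) ∂P - ∫ x, h x ∂(gaussianReal 0 1)| ≤
        min (4 * M0) M2 * B1 + M2 * B2)
    (hsmall : 4 * (B1 + B2) ≤ 5) :
    ∀ g : ℝ → ℝ, LipschitzWith 1 g →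
      |∫ ω, g (F ω) ∂P - ∫ x, g x ∂(gaussianReal 0 1)| ≤
        Real.sqrt (2 * (B1 + B2) * (5 + ∫ ω, |F ω| ∂P)) :=
  stmt9_general P F hFi B1 B2 hmain
end
end
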